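/- arXiv:math/0212139 — 9 statements merged into one kernel-verified Lean document; each statement's English description precedes it below -/
import Mathlib

section
/- Let m ≥ 2 and let D be an SDP design of order m. Then for any three distinct blocks B₁, B₂, B₃ of D, the cardinality |B₁ ∩ B₂ ∩ B₃| is equal to either 2^(2m−3) − 2^(m−1) or 2^(2m−3) − 2^(m−2). In particular, SDP designs are quasi-3 for blocks. -/
open Finset
open scoped symmDiff

/-- A square 2-(v,k,λ) design on the point type `α`: the block family `ℬ` consists of
`v` distinct `k`-subsets, every pair of distinct points lies in exactly `lam` blocks,
and (as is automatic for square designs) any two distinct blocks meet in `lam` points. -/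
def IsSquareDesign {α : Type*} [Fintype α] [DecidableEq α]
    (v k lam : ℕ) (ℬ : Finset (Finset α)) : Prop :=
  Fintype.card α = v ∧ ℬ.card = v ∧ (∀ B ∈ ℬ, B.card = k) ∧
  (∀ p q : α, p ≠ q → (ℬ.filter fun B => p ∈ B ∧ q ∈ B).card = lam) ∧
  (∀ B₁ ∈ ℬ, ∀ B₂ ∈ ℬ, B₁ ≠ B₂ → (B₁ ∩ B₂).card = lam)

/-- An SDP design of order `m`: a square 2-(2^(2m), 2^(2m-1)-2^(m-1), 2^(2m-2)-2^(m-1))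
design in which the symmetric difference of any three distinct blocks is a block or the
complement of a block. -/
def IsSDPDesign {α : Type*} [Fintype α] [DecidableEq α]
    (m : ℕ) (ℬ : Finset (Finset α)) : Prop :=
  IsSquareDesign (2^(2*m)) (2^(2*m-1) - 2^(m-1)) (2^(2*m-2) - 2^(m-1)) ℬ ∧
  ∀ B₁ ∈ ℬ, ∀ B₂ ∈ ℬ, ∀ B₃ ∈ ℬ, B₁ ≠ B₂ → B₁ ≠ B₃ → B₂ ≠ B₃ →
    B₁ ∆ B₂ ∆ B₃ ∈ ℬ ∨ (B₁ ∆ B₂ ∆ B₃)ᶜ ∈ ℬ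

/-! Writing `A = 2^(2m-3)` and `a = 2^(m-2)`, an SDP design has `v = 8A`, `k = 4A - 2a` and
`λ = 2A - 2a`. Counting points by how many of three distinct blocks contain them gives
`|B₁ ∆ B₂ ∆ B₃| + 6λ = 3k + 4|B₁ ∩ B₂ ∩ B₃|`, and the SDP property forces `|B₁ ∆ B₂ ∆ B₃|` to be
`k` or `v - k`. Solving for the triple intersection gives `A - 2a` or `A - a`. -/

section SymmDiffCard

variable {α : Type*} [DecidableEq α]

theorem Finset.card_symmDiff_add_two_mul_card_inter (s t : Finset α) :
    #(s ∆ t) + 2 * #(s ∩ t) = #s + #t := by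
  have hunion : s ∆ t ∪ s ∩ t = s ∪ t := symmDiff_sup_inf s t
  have hdisj : Disjoint (s ∆ t) (s ∩ t) := disjoint_symmDiff_inf s t
  rw [← card_union_add_card_inter, ← hunion, card_union_of_disjoint hdisj]
  omega

theorem Finset.card_symmDiff_symmDiff_add (s t u : Finset α) :
    #(s ∆ t ∆ u) + 2 * (#(s ∩ t) + #(s ∩ u) + #(t ∩ u)) = #s + #t + #u + 4 * #(s ∩ t ∩ u) := by
  have h₁ := card_symmDiff_add_two_mul_card_inter s t
  have h₂ := card_symmDiff_add_two_mul_card_inter (s ∆ t) u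
  have h₃ := card_symmDiff_add_two_mul_card_inter (s ∩ u) (t ∩ u)
  rw [show s ∆ t ∩ u = (s ∩ u) ∆ (t ∩ u) from inf_symmDiff_distrib_right s t u] at h₂
  rw [← inter_inter_distrib_right] at h₃
  omega

end SymmDiffCard

theorem IsSquareDesign.card_symmDiff_symmDiff_add {α : Type*} [Fintype α] [DecidableEq α]
    {v k lam : ℕ} {ℬ : Finset (Finset α)} (hD : IsSquareDesign v k lam ℬ)
    {B₁ B₂ B₃ : Finset α} (h₁ : B₁ ∈ ℬ) (h₂ : B₂ ∈ ℬ) (h₃ : B₃ ∈ ℬ)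
    (h₁₂ : B₁ ≠ B₂) (h₁₃ : B₁ ≠ B₃) (h₂₃ : B₂ ≠ B₃) :
    #(B₁ ∆ B₂ ∆ B₃) + 6 * lam = 3 * k + 4 * #(B₁ ∩ B₂ ∩ B₃) := by
  obtain ⟨-, -, hk, -, hlam⟩ := hD
  have := Finset.card_symmDiff_symmDiff_add B₁ B₂ B₃
  rw [hlam B₁ h₁ B₂ h₂ h₁₂, hlam B₁ h₁ B₃ h₃ h₁₃, hlam B₂ h₂ B₃ h₃ h₂₃,
    hk B₁ h₁, hk B₂ h₂, hk B₃ h₃] at this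
  omega

theorem IsSDPDesign.card_symmDiff_symmDiff {α : Type*} [Fintype α] [DecidableEq α]
    {m : ℕ} {ℬ : Finset (Finset α)} (hD : IsSDPDesign m ℬ)
    {B₁ B₂ B₃ : Finset α} (h₁ : B₁ ∈ ℬ) (h₂ : B₂ ∈ ℬ) (h₃ : B₃ ∈ ℬ)
    (h₁₂ : B₁ ≠ B₂) (h₁₃ : B₁ ≠ B₃) (h₂₃ : B₂ ≠ B₃) :
    #(B₁ ∆ B₂ ∆ B₃) = 2^(2*m-1) - 2^(m-1) ∨
      #(B₁ ∆ B₂ ∆ B₃) = 2^(2*m) - (2^(2*m-1) - 2^(m-1)) := by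
  obtain ⟨⟨hv, -, hk, -, -⟩, hsdp⟩ := hD
  rcases hsdp B₁ h₁ B₂ h₂ B₃ h₃ h₁₂ h₁₃ h₂₃ with hblock | hcompl
  · exact Or.inl (hk _ hblock)
  · right
    rw [← hk _ hcompl, card_compl, hv, Nat.sub_sub_self (hv ▸ card_le_univ _)]

theorem sdp_quasi3_for_blocks {m : ℕ} (hm : 2 ≤ m)
    {α : Type*} [Fintype α] [DecidableEq α] {ℬ : Finset (Finset α)}
    (hD : IsSDPDesign m ℬ) :
    ∀ B₁ ∈ ℬ, ∀ B₂ ∈ ℬ, ∀ B₃ ∈ ℬ, B₁ ≠ B₂ → B₁ ≠ B₃ → B₂ ≠ B₃ →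
      (B₁ ∩ B₂ ∩ B₃).card = 2^(2*m-3) - 2^(m-1) ∨
      (B₁ ∩ B₂ ∩ B₃).card = 2^(2*m-3) - 2^(m-2) := by
  intro B₁ h₁ B₂ h₂ B₃ h₃ h₁₂ h₁₃ h₂₃
  have hcount := hD.1.card_symmDiff_symmDiff_add h₁ h₂ h₃ h₁₂ h₁₃ h₂₃
  have hsymm := hD.card_symmDiff_symmDiff h₁ h₂ h₃ h₁₂ h₁₃ h₂₃
  have hv : 2^(2*m) = 2^3 * 2^(2*m-3) := by rw [← pow_add]; congr 1; omega
  have hk : 2^(2*m-1) = 2^2 * 2^(2*m-3) := by rw [← pow_add]; congr 1; omega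
  have hlam : 2^(2*m-2) = 2 * 2^(2*m-3) := by rw [← pow_succ']; congr 1; omega
  have ha : 2^(m-1) = 2 * 2^(m-2) := by rw [← pow_succ']; congr 1; omega
  have hle : 2^(m-1) ≤ 2^(2*m-3) := Nat.pow_le_pow_right two_pos (by omega)
  omega
end

section
/- Let u ≥ 1 and let D = (X, ℬ) be a square 2-(4u², 2u²−u, u²−u) design. Then the symmetric difference of any three distinct blocks of D is a block or the complement of a block (i.e., D has the symmetric difference property) if and only if for any four distinct blocks B₁, B₂, B₃, B₄ of D, the cardinality |B₁ Δ B₂ Δ B₃ Δ B₄| is equal to 0, 2u², or 4u². -/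
open Finset
open scoped symmDiff

set_option maxHeartbeats 1600000

private lemma card_symmDiff_add' {α : Type*} [DecidableEq α] (s t : Finset α) :
    (s ∆ t).card + 2 * (s ∩ t).card = s.card + t.card := by
  rw [symmDiff_def, sup_eq_union, card_union_of_disjoint disjoint_sdiff_sdiff]
  have h1 := card_sdiff_add_card_inter s t
  have h2 := card_sdiff_add_card_inter t s
  rw [inter_comm t s] at h2
  omega

private lemma sum_inter_card' {α : Type*} [DecidableEq α] (C : Finset α)
    (ℬ : Finset (Finset α)) :
    ∑ B ∈ ℬ, (C ∩ B).card = ∑ p ∈ C, (ℬ.filter fun B => p ∈ B).card := by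
  have h : ∀ B : Finset α, (C ∩ B).card = ∑ p ∈ C, if p ∈ B then 1 else 0 := by
    intro B
    rw [← filter_mem_eq_inter, card_filter]
  simp only [h, card_filter]
  exact Finset.sum_comm

private lemma sum_inter_sq' {α : Type*} [DecidableEq α] (C : Finset α)
    (ℬ : Finset (Finset α)) :
    ∑ B ∈ ℬ, (C ∩ B).card * (C ∩ B).card
      = ∑ p ∈ C, ∑ q ∈ C, (ℬ.filter fun B => p ∈ B ∧ q ∈ B).card := by
  have h : ∀ B : Finset α, (C ∩ B).card = ∑ p ∈ C, if p ∈ B then 1 else 0 := by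
    intro B
    rw [← filter_mem_eq_inter, card_filter]
  simp only [h, card_filter, Finset.sum_mul_sum]
  rw [Finset.sum_comm]
  refine Finset.sum_congr rfl fun p _ => ?_
  rw [Finset.sum_comm]
  refine Finset.sum_congr rfl fun q _ => ?_
  refine Finset.sum_congr rfl fun B _ => ?_
  split_ifs <;> simp_all

private lemma rep_count' {α : Type*} [Fintype α] [DecidableEq α] {u : ℕ} (hu : 1 ≤ u)
    {ℬ : Finset (Finset α)}
    (hD : IsSquareDesign (4*u^2) (2*u^2 - u) (u^2 - u) ℬ) (p : α) :
    (ℬ.filter fun B => p ∈ B).card = 2*u^2 - u := by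
  obtain ⟨hv, hb, hk, hpair, hint⟩ := hD
  rcases eq_or_lt_of_le hu with h1 | h2
  · -- u = 1
    subst h1
    norm_num at hv hb hk hpair hint ⊢
    have hle : ∀ q : α, (ℬ.filter fun B => q ∈ B).card ≤ 1 := by
      intro q
      by_contra h
      push_neg at h
      obtain ⟨B, hB, B', hB', hne⟩ := Finset.one_lt_card.mp h
      rw [Finset.mem_filter] at hB hB'
      have hc := hint B hB.1 B' hB'.1 hne
      have hq : q ∈ B ∩ B' := Finset.mem_inter.mpr ⟨hB.2, hB'.2⟩
      simp [hc] at hq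
    have hsum : ∑ q ∈ univ, (ℬ.filter fun B => q ∈ B).card = 4 := by
      simp only [card_filter]
      rw [Finset.sum_comm]
      have : ∀ B ∈ ℬ, (∑ q ∈ univ, if q ∈ B then 1 else 0) = 1 := by
        intro B hB
        rw [Finset.sum_ite_mem, Finset.univ_inter, Finset.sum_const,
          smul_eq_mul, mul_one]
        exact hk B hB
      rw [Finset.sum_congr rfl this, sum_const, smul_eq_mul, hb]
    by_contra hne
    have h0 : (ℬ.filter fun B => p ∈ B).card = 0 := by
      have := hle p; omega
    have hlt : ∑ q ∈ univ, (ℬ.filter fun B => q ∈ B).card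
        < ∑ _q ∈ (univ : Finset α), (1:ℕ) := by
      refine Finset.sum_lt_sum (fun q _ => hle q) ⟨p, mem_univ p, ?_⟩
      omega
    rw [hsum, sum_const, smul_eq_mul, mul_one, card_univ, hv] at hlt
    omega
  · -- u ≥ 2
    have h2 : 2 ≤ u := h2
    have hcount : ∑ q ∈ univ.erase p, (ℬ.filter fun B => p ∈ B ∧ q ∈ B).card
        = (4*u^2 - 1) * (u^2 - u) := by
      rw [Finset.sum_congr rfl (fun q hq => hpair p q
        (fun h => (Finset.mem_erase.mp hq).1 h.symm))]
      rw [sum_const, card_erase_of_mem (mem_univ p), card_univ, hv, smul_eq_mul]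
    have hswap : ∑ q ∈ univ.erase p, (ℬ.filter fun B => p ∈ B ∧ q ∈ B).card
        = (ℬ.filter fun B => p ∈ B).card * (2*u^2 - u - 1) := by
      simp only [card_filter]
      rw [Finset.sum_comm]
      have : ∀ B ∈ ℬ, (∑ q ∈ univ.erase p, if p ∈ B ∧ q ∈ B then 1 else 0)
          = if p ∈ B then B.card - 1 else 0 := by
        intro B hB
        by_cases hp : p ∈ B
        · simp only [hp, true_and, if_true]
          rw [← card_filter]
          rw [show (univ.erase p).filter (fun q => q ∈ B) = B.erase p by
            ext a; simp [Finset.mem_erase, and_comm]]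
          exact card_erase_of_mem hp
        · simp [hp]
      rw [Finset.sum_congr rfl this, ← Finset.sum_filter]
      rw [Finset.sum_congr rfl (fun B hB => by
        rw [hk B (Finset.mem_of_mem_filter B hB)])]
      rw [sum_const, smul_eq_mul]
      congr 1
      exact card_filter _ _
    rw [hswap] at hcount
    have hkey : (2*u^2 - u) * (2*u^2 - u - 1) = (4*u^2 - 1) * (u^2 - u) := by
      have e1 : u ≤ u^2 := Nat.le_self_pow (by norm_num) u
      have e2 : u + 1 ≤ 2*u^2 := by nlinarith
      zify [e1, e2, show u ≤ 2*u^2 by omega, show 1 ≤ 2*u^2 - u by omega,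
        show 1 ≤ 4*u^2 by nlinarith]
      ring
    have hpos : 0 < 2*u^2 - u - 1 := by
      have : u + 2 ≤ 2*u^2 := by nlinarith
      omega
    exact Nat.eq_of_mul_eq_mul_right hpos (by rw [hcount, hkey])

theorem sdp_iff_four_block_symmDiff {u : ℕ} (hu : 1 ≤ u)
    {α : Type*} [Fintype α] [DecidableEq α] {ℬ : Finset (Finset α)}
    (hD : IsSquareDesign (4*u^2) (2*u^2 - u) (u^2 - u) ℬ) :
    (∀ B₁ ∈ ℬ, ∀ B₂ ∈ ℬ, ∀ B₃ ∈ ℬ, B₁ ≠ B₂ → B₁ ≠ B₃ → B₂ ≠ B₃ →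
        B₁ ∆ B₂ ∆ B₃ ∈ ℬ ∨ (B₁ ∆ B₂ ∆ B₃)ᶜ ∈ ℬ) ↔
      (∀ B₁ ∈ ℬ, ∀ B₂ ∈ ℬ, ∀ B₃ ∈ ℬ, ∀ B₄ ∈ ℬ,
        B₁ ≠ B₂ → B₁ ≠ B₃ → B₁ ≠ B₄ → B₂ ≠ B₃ → B₂ ≠ B₄ → B₃ ≠ B₄ →
        (B₁ ∆ B₂ ∆ B₃ ∆ B₄).card = 0 ∨
        (B₁ ∆ B₂ ∆ B₃ ∆ B₄).card = 2*u^2 ∨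
        (B₁ ∆ B₂ ∆ B₃ ∆ B₄).card = 4*u^2) := by
  obtain ⟨hv, hb, hk, hpair, hint⟩ := id hD
  have hu2 : u ≤ u^2 := Nat.le_self_pow (by norm_num) u
  have hu2' : u ≤ 2*u^2 := by omega
  have hpairc : ∀ A ∈ ℬ, ∀ B ∈ ℬ, A ≠ B → (A ∆ B).card = 2*u^2 := by
    intro A hA B hB hAB
    have h := card_symmDiff_add' A B
    rw [hint A hA B hB hAB, hk A hA, hk B hB] at h
    omega
  constructor
  · -- forward direction
    intro hSDP B₁ hB₁ B₂ hB₂ B₃ hB₃ B₄ hB₄ h12 h13 h14 h23 h24 h34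
    rcases hSDP B₁ hB₁ B₂ hB₂ B₃ hB₃ h12 h13 h23 with hmem | hmem
    · by_cases hE : B₁ ∆ B₂ ∆ B₃ = B₄
      · left; rw [hE, symmDiff_self]; simp
      · right; left; exact hpairc _ hmem _ hB₄ hE
    · have hco : B₁ ∆ B₂ ∆ B₃ ∆ B₄ = ((B₁ ∆ B₂ ∆ B₃)ᶜ ∆ B₄)ᶜ := by
        ext a
        simp only [Finset.mem_symmDiff, Finset.mem_compl]
        tauto
      rw [hco, Finset.card_compl, hv]
      by_cases hE : (B₁ ∆ B₂ ∆ B₃)ᶜ = B₄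
      · right; right; rw [hE, symmDiff_self]; simp
      · right; left
        rw [hpairc _ hmem _ hB₄ hE]
        omega
  · -- backward direction
    intro h4 B₁ hB₁ B₂ hB₂ B₃ hB₃ h12 h13 h23
    by_contra hcon
    push_neg at hcon
    obtain ⟨hC1, hC2⟩ := hcon
    set C := B₁ ∆ B₂ ∆ B₃ with hCdef
    have hall : ∀ B ∈ ℬ, (C ∆ B).card = 2*u^2 := by
      intro B hB
      by_cases e1 : B = B₁
      · subst e1
        rw [show C ∆ B = B₂ ∆ B₃ by
          ext a; simp only [hCdef, Finset.mem_symmDiff]; tauto]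
        exact hpairc _ hB₂ _ hB₃ h23
      · by_cases e2 : B = B₂
        · subst e2
          rw [show C ∆ B = B₁ ∆ B₃ by
            ext a; simp only [hCdef, Finset.mem_symmDiff]; tauto]
          exact hpairc _ hB₁ _ hB₃ h13
        · by_cases e3 : B = B₃
          · subst e3
            rw [show C ∆ B = B₁ ∆ B₂ by
              ext a; simp only [hCdef, Finset.mem_symmDiff]; tauto]
            exact hpairc _ hB₁ _ hB₂ h12
          · rcases h4 B₁ hB₁ B₂ hB₂ B₃ hB₃ B hB h12 h13
              (fun h => e1 h.symm) h23 (fun h => e2 h.symm)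
              (fun h => e3 h.symm) with h0 | hmid | htop
            · exfalso
              rw [Finset.card_eq_zero] at h0
              have : C = B := by
                have := symmDiff_eq_bot.mp (by exact_mod_cast h0)
                exact this
              exact hC1 (this ▸ hB)
            · exact hmid
            · exfalso
              have huniv : C ∆ B = univ := by
                have hcard : (C ∆ B).card = Fintype.card α := by rw [htop, hv]
                exact (Finset.card_eq_iff_eq_univ _).mp hcard
              have hcb : Cᶜ = B := by
                ext a
                have ha := Finset.eq_univ_iff_forall.mp huniv a
                simp only [Finset.mem_symmDiff] at ha
                simp only [Finset.mem_compl]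
                tauto
              exact hC2 (hcb ▸ hB)
    -- counting argument
    have hrep := rep_count' hu hD
    have hconst : ∀ B ∈ ℬ, 2*u^2 + 2*(C ∩ B).card = C.card + (2*u^2 - u) := by
      intro B hB
      have h := card_symmDiff_add' C B
      rw [hall B hB, hk B hB] at h
      omega
    set c := C.card with hcdef
    set μ := (C ∩ B₁).card with hμdef
    have hμB : ∀ B ∈ ℬ, (C ∩ B).card = μ := by
      intro B hB
      have h1 := hconst B hB
      have h2 := hconst B₁ hB₁
      omega
    have hS1 : 4*u^2 * μ = c * (2*u^2 - u) := by
      have e1 := sum_inter_card' C ℬ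
      rw [Finset.sum_congr rfl hμB, sum_const, smul_eq_mul, hb] at e1
      rw [Finset.sum_congr rfl (fun p _ => hrep p), sum_const, smul_eq_mul] at e1
      exact e1
    have hS2 : 4*u^2 * (μ * μ) = c * ((2*u^2 - u) + (c - 1) * (u^2 - u)) := by
      have f1 := sum_inter_sq' C ℬ
      rw [Finset.sum_congr rfl (fun B hB => by rw [hμB B hB]),
        sum_const, smul_eq_mul, hb] at f1
      have f3 : ∀ p ∈ C, ∑ q ∈ C, (ℬ.filter fun B => p ∈ B ∧ q ∈ B).card
          = (2*u^2 - u) + (c - 1) * (u^2 - u) := by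
        intro p hp
        rw [← Finset.add_sum_erase _ _ hp]
        congr 1
        · rw [show (ℬ.filter fun B => p ∈ B ∧ p ∈ B) = ℬ.filter fun B => p ∈ B from
            filter_congr (fun B _ => by simp)]
          exact hrep p
        · rw [Finset.sum_congr rfl (fun q hq => hpair p q
            (fun h => (Finset.mem_erase.mp hq).1 h.symm))]
          rw [sum_const, card_erase_of_mem hp, smul_eq_mul]
      rw [Finset.sum_congr rfl f3, sum_const, smul_eq_mul] at f1
      exact f1
    -- final arithmetic contradiction
    have hc1 : c = 2*μ + u := by
      have := hconst B₁ hB₁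
      omega
    have hcpos : 1 ≤ c := by omega
    zify [hu2, hu2', hcpos] at hS1 hS2
    have hzc : (c : ℤ) = 2*(μ:ℤ) + u := by exact_mod_cast congrArg (Nat.cast (R := ℤ)) hc1
    have h5 : (u:ℤ) * (2*(μ:ℤ) + u - 2*(u:ℤ)^2) = 0 := by
      linear_combination hS1 + (2*(u:ℤ)^2 - u) * hzc
    have hu0 : (u:ℤ) ≠ 0 := Int.natCast_ne_zero.mpr (by omega)
    have hμz : 2*(μ:ℤ) = 2*(u:ℤ)^2 - u := by
      rcases mul_eq_zero.mp h5 with h | h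
      · exact absurd h hu0
      · linarith
    have hczz : (c : ℤ) = 2*(u:ℤ)^2 := by linarith
    rw [hczz] at hS2
    have hsq : 4*(μ:ℤ)^2 = (2*(u:ℤ)^2 - u)^2 := by
      linear_combination (2*(μ:ℤ) + 2*(u:ℤ)^2 - u) * hμz
    have hu4 : (u:ℤ)^4 = 0 := by
      linear_combination (u:ℤ)^2 * hsq - hS2
    have : (u:ℤ) = 0 := by
      exact pow_eq_zero_iff (by norm_num) |>.mp hu4
    have : u = 0 := by exact_mod_cast this
    omega
end

section
/- Let m ≥ 3 and let D be an SDP design of order m. Then for any four distinct blocks B₁, B₂, B₃, B₄ of D, the cardinality |B₁ ∩ B₂ ∩ B₃ ∩ B₄| is one of the following seven values: 0, 2^(2m−3) − 2^(m−1), 2^(2m−4), 2^(2m−4) − 2^(m−3), 2^(2m−4) − 2^(m−2), 2^(2m−4) − 3·2^(m−3), or 2^(2m−4) − 2^(m−1). -/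
open Finset
open scoped symmDiff

private lemma sdp_cardZ {α : Type*} [Fintype α] [DecidableEq α] (s : Finset α) :
    (s.card : ℤ) = ∑ x : α, if x ∈ s then 1 else 0 := by
  rw [Finset.sum_ite_mem, Finset.univ_inter, Finset.sum_const]
  simp

private lemma sdp_card_sd2 {α : Type*} [Fintype α] [DecidableEq α] (A B : Finset α) :
    ((A ∆ B).card : ℤ) = A.card + B.card - 2 * (A ∩ B).card := by
  simp only [sdp_cardZ, Finset.mul_sum, ← Finset.sum_add_distrib, ← Finset.sum_sub_distrib]
  refine Finset.sum_congr rfl fun x _ => ?_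
  by_cases hA : x ∈ A <;> by_cases hB : x ∈ B <;>
    simp [Finset.mem_symmDiff, Finset.mem_inter, hA, hB]

private lemma sdp_card_sd3 {α : Type*} [Fintype α] [DecidableEq α] (A B C : Finset α) :
    ((A ∆ B ∆ C).card : ℤ) = A.card + B.card + C.card
      - 2 * ((A ∩ B).card + (A ∩ C).card + (B ∩ C).card)
      + 4 * (A ∩ B ∩ C).card := by
  simp only [sdp_cardZ, Finset.mul_sum, ← Finset.sum_add_distrib, ← Finset.sum_sub_distrib]
  refine Finset.sum_congr rfl fun x _ => ?_
  by_cases hA : x ∈ A <;> by_cases hB : x ∈ B <;> by_cases hC : x ∈ C <;>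
    simp [Finset.mem_symmDiff, Finset.mem_inter, hA, hB, hC]

private lemma sdp_card_sd4 {α : Type*} [Fintype α] [DecidableEq α] (A B C D : Finset α) :
    ((A ∆ B ∆ C ∆ D).card : ℤ) = A.card + B.card + C.card + D.card
      - 2 * ((A ∩ B).card + (A ∩ C).card + (A ∩ D).card + (B ∩ C).card
             + (B ∩ D).card + (C ∩ D).card)
      + 4 * ((A ∩ B ∩ C).card + (A ∩ B ∩ D).card + (A ∩ C ∩ D).card + (B ∩ C ∩ D).card)
      - 8 * (A ∩ B ∩ C ∩ D).card := by
  simp only [sdp_cardZ, Finset.mul_sum, ← Finset.sum_add_distrib, ← Finset.sum_sub_distrib]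
  refine Finset.sum_congr rfl fun x _ => ?_
  by_cases hA : x ∈ A <;> by_cases hB : x ∈ B <;> by_cases hC : x ∈ C <;> by_cases hD : x ∈ D <;>
    simp [Finset.mem_symmDiff, Finset.mem_inter, hA, hB, hC, hD]

private lemma sdp_val_gen (n c : ℕ) (hc : c * 2^n ≤ 2^(2*n+2)) (S : ℕ)
    (h : (S : ℤ) = 4 * ((2:ℤ)^n)^2 - c * (2:ℤ)^n) : S = 2^(2*n+2) - c * 2^n := by
  have key : (S : ℤ) = ((2^(2*n+2) - c * 2^n : ℕ) : ℤ) := by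
    rw [Nat.cast_sub hc]; push_cast; rw [h, pow_add, pow_mul']; ring
  exact_mod_cast key

private lemma sdp_le_help (n c : ℕ) (hc : c ≤ 4) : c * 2^n ≤ 2^(2*n+2) :=
  calc c * 2^n ≤ 4 * 2^n := Nat.mul_le_mul_right _ hc
    _ = 2^(n+2) := by rw [pow_add]; ring
    _ ≤ 2^(2*n+2) := Nat.pow_le_pow_right (by norm_num) (by omega)

private lemma sdp_val4 (n S : ℕ) (h : (S : ℤ) = 4 * ((2:ℤ)^n)^2) : S = 2^(2*n+2) := by
  have := sdp_val_gen n 0 (by simp) S (by rw [h]; push_cast; ring)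
  simpa using this

private lemma sdp_val3 (n S : ℕ) (h : (S : ℤ) = 4 * ((2:ℤ)^n)^2 - (2:ℤ)^n) :
    S = 2^(2*n+2) - 2^n := by
  have := sdp_val_gen n 1 (sdp_le_help n 1 (by norm_num)) S (by rw [h]; push_cast; ring)
  simpa using this

private lemma sdp_val2 (n S : ℕ) (h : (S : ℤ) = 4 * ((2:ℤ)^n)^2 - 2 * (2:ℤ)^n) :
    S = 2^(2*n+2) - 2^(n+1) := by
  have := sdp_val_gen n 2 (sdp_le_help n 2 (by norm_num)) S (by rw [h]; push_cast; ring)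
  rw [this]; congr 1; rw [pow_add]; ring

private lemma sdp_val1 (n S : ℕ) (h : (S : ℤ) = 4 * ((2:ℤ)^n)^2 - 3 * (2:ℤ)^n) :
    S = 2^(2*n+2) - 3 * 2^n := by
  exact sdp_val_gen n 3 (sdp_le_help n 3 (by norm_num)) S (by rw [h]; push_cast; ring)

private lemma sdp_val0 (n S : ℕ) (h : (S : ℤ) = 4 * ((2:ℤ)^n)^2 - 4 * (2:ℤ)^n) :
    S = 2^(2*n+2) - 2^(n+2) := by
  have := sdp_val_gen n 4 (sdp_le_help n 4 (by norm_num)) S (by rw [h]; push_cast; ring)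
  rw [this]; congr 1; rw [pow_add]; ring

private lemma sdp_valT (n S : ℕ) (h : (S : ℤ) = 8 * ((2:ℤ)^n)^2 - 4 * (2:ℤ)^n) :
    S = 2^(2*n+3) - 2^(n+2) := by
  have hle : (2:ℕ)^(n+2) ≤ 2^(2*n+3) := Nat.pow_le_pow_right (by norm_num) (by omega)
  have key : (S : ℤ) = ((2^(2*n+3) - 2^(n+2) : ℕ) : ℤ) := by
    rw [Nat.cast_sub hle]; push_cast; rw [h, pow_add, pow_add, pow_mul']; ring
  exact_mod_cast key

set_option maxHeartbeats 1600000 in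
theorem sdp_quadruple_intersections {m : ℕ} (hm : 3 ≤ m)
    {α : Type*} [Fintype α] [DecidableEq α] {ℬ : Finset (Finset α)}
    (hD : IsSDPDesign m ℬ) :
    ∀ B₁ ∈ ℬ, ∀ B₂ ∈ ℬ, ∀ B₃ ∈ ℬ, ∀ B₄ ∈ ℬ,
      B₁ ≠ B₂ → B₁ ≠ B₃ → B₁ ≠ B₄ → B₂ ≠ B₃ → B₂ ≠ B₄ → B₃ ≠ B₄ →
      (B₁ ∩ B₂ ∩ B₃ ∩ B₄).card = 0 ∨
      (B₁ ∩ B₂ ∩ B₃ ∩ B₄).card = 2^(2*m-3) - 2^(m-1) ∨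
      (B₁ ∩ B₂ ∩ B₃ ∩ B₄).card = 2^(2*m-4) ∨
      (B₁ ∩ B₂ ∩ B₃ ∩ B₄).card = 2^(2*m-4) - 2^(m-3) ∨
      (B₁ ∩ B₂ ∩ B₃ ∩ B₄).card = 2^(2*m-4) - 2^(m-2) ∨
      (B₁ ∩ B₂ ∩ B₃ ∩ B₄).card = 2^(2*m-4) - 3 * 2^(m-3) ∨
      (B₁ ∩ B₂ ∩ B₃ ∩ B₄).card = 2^(2*m-4) - 2^(m-1) := by
  obtain ⟨⟨hv, hcardB, hk, hpair, hlam⟩, hSDP⟩ := hD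
  obtain ⟨n, rfl⟩ : ∃ n, m = n + 3 := ⟨m - 3, by omega⟩
  simp only [show 2*(n+3)-1 = 2*n+5 from by omega, show (n+3)-1 = n+2 from by omega,
    show 2*(n+3)-2 = 2*n+4 from by omega, show 2*(n+3) = 2*n+6 from by omega] at hv hk hlam
  simp only [show 2*(n+3)-3 = 2*n+3 from by omega, show 2*(n+3)-4 = 2*n+2 from by omega,
    show (n+3)-1 = n+2 from by omega, show (n+3)-2 = n+1 from by omega,
    show (n+3)-3 = n from by omega]
  intro B₁ hB₁ B₂ hB₂ B₃ hB₃ B₄ hB₄ h12 h13 h14 h23 h24 h34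
  -- Integer versions of the design parameters, as polynomials in q = 2^n
  have hkZ : ∀ B ∈ ℬ, (B.card : ℤ) = 32 * ((2:ℤ)^n)^2 - 4 * (2:ℤ)^n := by
    intro B hB
    rw [hk B hB, Nat.cast_sub (Nat.pow_le_pow_right (by norm_num) (by omega))]
    push_cast
    rw [show (2:ℤ)^(2*n+5) = 32 * ((2:ℤ)^n)^2 from by rw [pow_add, pow_mul']; ring,
       show (2:ℤ)^(n+2) = 4 * (2:ℤ)^n from by rw [pow_add]; ring]
  have hlamZ : ∀ X ∈ ℬ, ∀ Y ∈ ℬ, X ≠ Y →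
      ((X ∩ Y).card : ℤ) = 16 * ((2:ℤ)^n)^2 - 4 * (2:ℤ)^n := by
    intro X hX Y hY hXY
    rw [hlam X hX Y hY hXY, Nat.cast_sub (Nat.pow_le_pow_right (by norm_num) (by omega))]
    push_cast
    rw [show (2:ℤ)^(2*n+4) = 16 * ((2:ℤ)^n)^2 from by rw [pow_add, pow_mul']; ring,
       show (2:ℤ)^(n+2) = 4 * (2:ℤ)^n from by rw [pow_add]; ring]
  have hvZ : ((Fintype.card α : ℕ) : ℤ) = 64 * ((2:ℤ)^n)^2 := by
    rw [hv]; push_cast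
    rw [show (2:ℤ)^(2*n+6) = 64 * ((2:ℤ)^n)^2 from by rw [pow_add, pow_mul']; ring]
  have hcomplZ : ∀ s : Finset α, (s.card : ℤ) + (sᶜ.card : ℤ) = 64 * ((2:ℤ)^n)^2 := by
    intro s
    rw [← hvZ]
    exact_mod_cast congrArg (fun t : ℕ => (t : ℤ)) (Finset.card_add_card_compl s)
  -- Triple intersections take one of two values
  have htriple : ∀ X ∈ ℬ, ∀ Y ∈ ℬ, ∀ Z ∈ ℬ, X ≠ Y → X ≠ Z → Y ≠ Z →
      ((X ∩ Y ∩ Z).card : ℤ) = 8 * ((2:ℤ)^n)^2 - 4 * (2:ℤ)^n ∨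
      ((X ∩ Y ∩ Z).card : ℤ) = 8 * ((2:ℤ)^n)^2 - 2 * (2:ℤ)^n := by
    intro X hX Y hY Z hZ hXY hXZ hYZ
    have hid := sdp_card_sd3 X Y Z
    rw [hkZ X hX, hkZ Y hY, hkZ Z hZ, hlamZ X hX Y hY hXY, hlamZ X hX Z hZ hXZ,
      hlamZ Y hY Z hZ hYZ] at hid
    rcases hSDP X hX Y hY Z hZ hXY hXZ hYZ with h | h
    · left
      rw [hkZ _ h] at hid
      linarith
    · right
      have hc := hkZ _ h
      have hcompl := hcomplZ (X ∆ Y ∆ Z)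
      linarith
  -- membership of the triple intersection in the triple symmetric difference
  have hsub : B₁ ∩ B₂ ∩ B₃ ⊆ B₁ ∆ B₂ ∆ B₃ := by
    intro x hx
    simp only [Finset.mem_inter] at hx
    simp only [Finset.mem_symmDiff]
    tauto
  -- the main computation, given that the quadruple symmetric difference has size 2^(2m-1)
  have hmain : ((B₁ ∆ B₂ ∆ B₃ ∆ B₄).card : ℤ) = 32 * ((2:ℤ)^n)^2 →
      ((B₁ ∩ B₂ ∩ B₃ ∩ B₄).card = 0 ∨
      (B₁ ∩ B₂ ∩ B₃ ∩ B₄).card = 2^(2*n+3) - 2^(n+2) ∨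
      (B₁ ∩ B₂ ∩ B₃ ∩ B₄).card = 2^(2*n+2) ∨
      (B₁ ∩ B₂ ∩ B₃ ∩ B₄).card = 2^(2*n+2) - 2^n ∨
      (B₁ ∩ B₂ ∩ B₃ ∩ B₄).card = 2^(2*n+2) - 2^(n+1) ∨
      (B₁ ∩ B₂ ∩ B₃ ∩ B₄).card = 2^(2*n+2) - 3 * 2^n ∨
      (B₁ ∩ B₂ ∩ B₃ ∩ B₄).card = 2^(2*n+2) - 2^(n+2)) := by
    intro hd4
    have hid := sdp_card_sd4 B₁ B₂ B₃ B₄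
    rw [hd4, hkZ B₁ hB₁, hkZ B₂ hB₂, hkZ B₃ hB₃, hkZ B₄ hB₄,
      hlamZ B₁ hB₁ B₂ hB₂ h12, hlamZ B₁ hB₁ B₃ hB₃ h13, hlamZ B₁ hB₁ B₄ hB₄ h14,
      hlamZ B₂ hB₂ B₃ hB₃ h23, hlamZ B₂ hB₂ B₄ hB₄ h24, hlamZ B₃ hB₃ B₄ hB₄ h34] at hid
    rcases htriple B₁ hB₁ B₂ hB₂ B₃ hB₃ h12 h13 h23 with t1 | t1 <;>
    rcases htriple B₁ hB₁ B₂ hB₂ B₄ hB₄ h12 h14 h24 with t2 | t2 <;>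
    rcases htriple B₁ hB₁ B₃ hB₃ B₄ hB₄ h13 h14 h34 with t3 | t3 <;>
    rcases htriple B₂ hB₂ B₃ hB₃ B₄ hB₄ h23 h24 h34 with t4 | t4 <;>
    rw [t1, t2, t3, t4] at hid <;>
    first
      | exact Or.inr (Or.inr (Or.inl (sdp_val4 n _ (by linarith))))
      | exact Or.inr (Or.inr (Or.inr (Or.inl (sdp_val3 n _ (by linarith)))))
      | exact Or.inr (Or.inr (Or.inr (Or.inr (Or.inl (sdp_val2 n _ (by linarith))))))
      | exact Or.inr (Or.inr (Or.inr (Or.inr (Or.inr (Or.inl (sdp_val1 n _ (by linarith)))))))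
      | exact Or.inr (Or.inr (Or.inr (Or.inr (Or.inr (Or.inr (sdp_val0 n _ (by linarith)))))))
  rcases hSDP B₁ hB₁ B₂ hB₂ B₃ hB₃ h12 h13 h23 with hCb | hCc
  · by_cases hC4 : B₁ ∆ B₂ ∆ B₃ = B₄
    · -- B₄ is the triple symmetric difference: quadruple = triple intersection, value t₁
      right; left
      have heq : B₁ ∩ B₂ ∩ B₃ ∩ B₄ = B₁ ∩ B₂ ∩ B₃ :=
        Finset.inter_eq_left.mpr (hC4 ▸ hsub)
      rw [heq]
      have hid := sdp_card_sd3 B₁ B₂ B₃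
      rw [hkZ B₁ hB₁, hkZ B₂ hB₂, hkZ B₃ hB₃, hlamZ B₁ hB₁ B₂ hB₂ h12,
        hlamZ B₁ hB₁ B₃ hB₃ h13, hlamZ B₂ hB₂ B₃ hB₃ h23, hkZ _ hCb] at hid
      exact sdp_valT n _ (by linarith)
    · -- generic case: |C ∆ B₄| = 2k - 2λ = 2^(2m-1)
      apply hmain
      rw [sdp_card_sd2, hkZ _ hCb, hkZ B₄ hB₄, hlamZ _ hCb B₄ hB₄ hC4]
      ring
  · by_cases hC4 : (B₁ ∆ B₂ ∆ B₃)ᶜ = B₄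
    · -- B₄ is the complement of the triple symmetric difference: quadruple intersection empty
      left
      rw [Finset.card_eq_zero, Finset.eq_empty_iff_forall_notMem]
      intro x hx
      rw [Finset.mem_inter] at hx
      have hxC := hsub hx.1
      have : x ∈ (B₁ ∆ B₂ ∆ B₃)ᶜ := hC4 ▸ hx.2
      exact (Finset.mem_compl.mp this) hxC
    · apply hmain
      have h1 : (((B₁ ∆ B₂ ∆ B₃)ᶜ ∆ B₄).card : ℤ) = 32 * ((2:ℤ)^n)^2 := by
        rw [sdp_card_sd2, hkZ _ hCc, hkZ B₄ hB₄, hlamZ _ hCc B₄ hB₄ hC4]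
        ring
      have h2 : B₁ ∆ B₂ ∆ B₃ ∆ B₄ = ((B₁ ∆ B₂ ∆ B₃)ᶜ ∆ B₄)ᶜ := by
        show (B₁ ∆ B₂ ∆ B₃) ∆ B₄ = ((B₁ ∆ B₂ ∆ B₃)ᶜ ∆ B₄)ᶜ
        generalize B₁ ∆ B₂ ∆ B₃ = C
        ext x
        by_cases hx1 : x ∈ C <;> by_cases hx2 : x ∈ B₄ <;>
          simp only [Finset.mem_symmDiff, Finset.mem_compl, hx1, hx2] <;> tauto
      rw [h2]
      have h3 := hcomplZ ((B₁ ∆ B₂ ∆ B₃)ᶜ ∆ B₄)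
      linarith
end

section
/- Let m ≥ 2 and let D be an SDP design of order m. Let B₁, B₂, B₃, B₄ be four distinct blocks with |B₁ Δ B₂ Δ B₃ Δ B₄| = 2^(2m−1), and let N denote the number of the four triple intersections B₁∩B₂∩B₃, B₁∩B₂∩B₄, B₁∩B₃∩B₄, B₂∩B₃∩B₄ whose cardinality equals 2^(2m−3) − 2^(m−1). Then (as integers) 8·|B₁ ∩ B₂ ∩ B₃ ∩ B₄| = 2^(2m−1) − N·2^m. -/
open Finset
open scoped symmDiff

private lemma cardSD2 {α : Type*} [DecidableEq α] (A B : Finset α) :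
    ((A ∆ B).card : ℤ) = A.card + B.card - 2*(A ∩ B).card := by
  rw [symmDiff_def, sup_eq_union, Finset.card_union_of_disjoint disjoint_sdiff_sdiff]
  have h1 := Finset.card_sdiff_add_card_inter A B
  have h2 := Finset.card_sdiff_add_card_inter B A
  rw [Finset.inter_comm] at h2
  push_cast
  omega

private lemma cardSD3 {α : Type*} [DecidableEq α] (A B C : Finset α) :
    ((A ∆ B ∆ C).card : ℤ) = A.card + B.card + C.card
      - 2*((A ∩ B).card + (A ∩ C).card + (B ∩ C).card) + 4*(A ∩ B ∩ C).card := by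
  have h1 := cardSD2 (A ∆ B) C
  have hd : (A ∆ B) ∩ C = (A ∩ C) ∆ (B ∩ C) := inf_symmDiff_distrib_right A B C
  rw [hd] at h1
  have h2 := cardSD2 A B
  have h3 := cardSD2 (A ∩ C) (B ∩ C)
  have he : (A ∩ C) ∩ (B ∩ C) = A ∩ B ∩ C := by
    ext x; simp only [Finset.mem_inter]; tauto
  rw [he] at h3
  linarith

private lemma cardSD4 {α : Type*} [DecidableEq α] (A B C D : Finset α) :
    ((A ∆ B ∆ C ∆ D).card : ℤ) = A.card + B.card + C.card + D.card
      - 2*((A ∩ B).card + (A ∩ C).card + (A ∩ D).card + (B ∩ C).card + (B ∩ D).card + (C ∩ D).card)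
      + 4*((A ∩ B ∩ C).card + (A ∩ B ∩ D).card + (A ∩ C ∩ D).card + (B ∩ C ∩ D).card)
      - 8*(A ∩ B ∩ C ∩ D).card := by
  have h1 := cardSD2 (A ∆ B ∆ C) D
  have hd : ((A ∆ B ∆ C) ∩ D) = (A ∩ D) ∆ (B ∩ D) ∆ (C ∩ D) := by
    ext x; simp only [Finset.mem_symmDiff, Finset.mem_inter]; tauto
  rw [hd] at h1
  have h2 := cardSD3 A B C
  have h3 := cardSD3 (A ∩ D) (B ∩ D) (C ∩ D)
  have e1 : (A ∩ D) ∩ (B ∩ D) = A ∩ B ∩ D := by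
    ext x; simp only [Finset.mem_inter]; tauto
  have e2 : (A ∩ D) ∩ (C ∩ D) = A ∩ C ∩ D := by
    ext x; simp only [Finset.mem_inter]; tauto
  have e3 : (B ∩ D) ∩ (C ∩ D) = B ∩ C ∩ D := by
    ext x; simp only [Finset.mem_inter]; tauto
  have e4 : (A ∩ D) ∩ (B ∩ D) ∩ (C ∩ D) = A ∩ B ∩ C ∩ D := by
    ext x; simp only [Finset.mem_inter]; tauto
  rw [e4, e1, e2, e3] at h3
  linarith

private lemma triple_card {α : Type*} [Fintype α] [DecidableEq α] {n : ℕ}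
    {ℬ : Finset (Finset α)} (hD : IsSDPDesign (n+2) ℬ)
    {A B C : Finset α} (hA : A ∈ ℬ) (hB : B ∈ ℬ) (hC : C ∈ ℬ)
    (hAB : A ≠ B) (hAC : A ≠ C) (hBC : B ≠ C) :
    (A ∩ B ∩ C).card = 2^(2*n+1) - 2^(n+1) ∨ (A ∩ B ∩ C).card = 2^(2*n+1) - 2^n := by
  obtain ⟨⟨hv, -, hk, -, hlam⟩, hsdp⟩ := hD
  simp only [show 2*(n+2) = 2*n+4 from by omega, show 2*n+4-1 = 2*n+3 from by omega, show 2*n+4-2 = 2*n+2 from by omega,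
    show 2*n+4-3 = 2*n+1 from by omega, show 2*(n+2)-1 = 2*n+3 from by omega,
    show 2*(n+2)-2 = 2*n+2 from by omega, show n+2-1 = n+1 from by omega] at hv hk hlam
  have h3 := cardSD3 A B C
  rw [hk A hA, hk B hB, hk C hC, hlam A hA B hB hAB, hlam A hA C hC hAC,
    hlam B hB C hC hBC] at h3
  have hle1 : (2:ℕ)^(n+1) ≤ 2^(2*n+3) := Nat.pow_le_pow_right (by norm_num) (by omega)
  have hle2 : (2:ℕ)^(n+1) ≤ 2^(2*n+2) := Nat.pow_le_pow_right (by norm_num) (by omega)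
  have hK : ((2^(2*n+3) - 2^(n+1) : ℕ) : ℤ) = 2^(2*n+3) - 2^(n+1) := by
    push_cast [Nat.cast_sub hle1]; ring
  have hL : ((2^(2*n+2) - 2^(n+1) : ℕ) : ℤ) = 2^(2*n+2) - 2^(n+1) := by
    push_cast [Nat.cast_sub hle2]; ring
  rw [hK, hL] at h3
  have p1 : (2:ℤ)^(2*n+3) = 4 * 2^(2*n+1) := by ring
  have p2 : (2:ℤ)^(2*n+2) = 2 * 2^(2*n+1) := by ring
  have p3 : (2:ℤ)^(n+1) = 2 * 2^n := by ring
  have p4 : (2:ℤ)^(2*n+4) = 8 * 2^(2*n+1) := by ring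
  rcases hsdp A hA B hB C hC hAB hAC hBC with h | h
  · left
    have hc := hk _ h
    rw [hc, hK] at h3
    have hle3 : (2:ℕ)^(n+1) ≤ 2^(2*n+1) := Nat.pow_le_pow_right (by norm_num) (by omega)
    have : ((A ∩ B ∩ C).card : ℤ) = ((2^(2*n+1) - 2^(n+1) : ℕ) : ℤ) := by
      rw [Nat.cast_sub hle3]; push_cast; linarith
    exact_mod_cast this
  · right
    have hc := hk _ h
    rw [Finset.card_compl, hv] at hc
    have hle' : (A ∆ B ∆ C).card ≤ 2^(2*n+4) := by
      rw [← hv]; exact Finset.card_le_univ _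
    have hle4 : (2:ℕ)^(n+1) ≤ 2^(2*n+4) := Nat.pow_le_pow_right (by norm_num) (by omega)
    have hS : ((A ∆ B ∆ C).card : ℤ) = 2^(2*n+4) - (2^(2*n+3) - 2^(n+1)) := by
      have h5 : (A ∆ B ∆ C).card + (2^(2*n+3) - 2^(n+1)) = 2^(2*n+4) := by omega
      have := congrArg (Nat.cast (R := ℤ)) h5
      push_cast [hK] at this
      linarith
    rw [hS] at h3
    have hle5 : (2:ℕ)^n ≤ 2^(2*n+1) := Nat.pow_le_pow_right (by norm_num) (by omega)
    have : ((A ∩ B ∩ C).card : ℤ) = ((2^(2*n+1) - 2^n : ℕ) : ℤ) := by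
      rw [Nat.cast_sub hle5]; push_cast; linarith
    exact_mod_cast this

theorem sdp_four_blocks_symmDiff_half {m : ℕ} (hm : 2 ≤ m)
    {α : Type*} [Fintype α] [DecidableEq α] {ℬ : Finset (Finset α)}
    (hD : IsSDPDesign m ℬ)
    {B₁ B₂ B₃ B₄ : Finset α} (h₁ : B₁ ∈ ℬ) (h₂ : B₂ ∈ ℬ) (h₃ : B₃ ∈ ℬ) (h₄ : B₄ ∈ ℬ)
    (h₁₂ : B₁ ≠ B₂) (h₁₃ : B₁ ≠ B₃) (h₁₄ : B₁ ≠ B₄)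
    (h₂₃ : B₂ ≠ B₃) (h₂₄ : B₂ ≠ B₄) (h₃₄ : B₃ ≠ B₄)
    (hw : (B₁ ∆ B₂ ∆ B₃ ∆ B₄).card = 2^(2*m-1))
    (N : ℕ)
    (hN : N = (if (B₁ ∩ B₂ ∩ B₃).card = 2^(2*m-3) - 2^(m-1) then 1 else 0) +
              (if (B₁ ∩ B₂ ∩ B₄).card = 2^(2*m-3) - 2^(m-1) then 1 else 0) +
              (if (B₁ ∩ B₃ ∩ B₄).card = 2^(2*m-3) - 2^(m-1) then 1 else 0) +
              (if (B₂ ∩ B₃ ∩ B₄).card = 2^(2*m-3) - 2^(m-1) then 1 else 0)) :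
    8 * ((B₁ ∩ B₂ ∩ B₃ ∩ B₄).card : ℤ) = 2^(2*m-1) - N * 2^m := by
  obtain ⟨n, rfl⟩ : ∃ n, m = n + 2 := ⟨m - 2, by omega⟩
  have t123 := triple_card hD h₁ h₂ h₃ h₁₂ h₁₃ h₂₃
  have t124 := triple_card hD h₁ h₂ h₄ h₁₂ h₁₄ h₂₄
  have t134 := triple_card hD h₁ h₃ h₄ h₁₃ h₁₄ h₃₄
  have t234 := triple_card hD h₂ h₃ h₄ h₂₃ h₂₄ h₃₄
  obtain ⟨⟨hv, -, hk, -, hlam⟩, -⟩ := hD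
  simp only [show 2*(n+2) = 2*n+4 from by omega, show 2*n+4-1 = 2*n+3 from by omega, show 2*n+4-2 = 2*n+2 from by omega,
    show 2*n+4-3 = 2*n+1 from by omega, show 2*(n+2)-1 = 2*n+3 from by omega,
    show 2*(n+2)-2 = 2*n+2 from by omega, show 2*(n+2)-3 = 2*n+1 from by omega,
    show n+2-1 = n+1 from by omega] at hv hk hlam hw hN ⊢
  have h4 := cardSD4 B₁ B₂ B₃ B₄
  rw [hk _ h₁, hk _ h₂, hk _ h₃, hk _ h₄, hlam _ h₁ _ h₂ h₁₂, hlam _ h₁ _ h₃ h₁₃,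
    hlam _ h₁ _ h₄ h₁₄, hlam _ h₂ _ h₃ h₂₃, hlam _ h₂ _ h₄ h₂₄, hlam _ h₃ _ h₄ h₃₄, hw] at h4
  have hle1 : (2:ℕ)^(n+1) ≤ 2^(2*n+3) := Nat.pow_le_pow_right (by norm_num) (by omega)
  have hle2 : (2:ℕ)^(n+1) ≤ 2^(2*n+2) := Nat.pow_le_pow_right (by norm_num) (by omega)
  have hK : ((2^(2*n+3) - 2^(n+1) : ℕ) : ℤ) = 2^(2*n+3) - 2^(n+1) := by
    push_cast [Nat.cast_sub hle1]; ring
  have hL : ((2^(2*n+2) - 2^(n+1) : ℕ) : ℤ) = 2^(2*n+2) - 2^(n+1) := by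
    push_cast [Nat.cast_sub hle2]; ring
  rw [hK, hL] at h4
  have key : ∀ t : ℕ, t = 2^(2*n+1) - 2^(n+1) ∨ t = 2^(2*n+1) - 2^n →
      (t : ℤ) = 2^(2*n+1) - 2^n
        - (if t = 2^(2*n+1) - 2^(n+1) then (1:ℤ) else 0) * 2^n := by
    intro t ht
    have hle3 : (2:ℕ)^(n+1) ≤ 2^(2*n+1) := Nat.pow_le_pow_right (by norm_num) (by omega)
    have hle4 : (2:ℕ)^n ≤ 2^(2*n+1) := Nat.pow_le_pow_right (by norm_num) (by omega)
    have hlt : (2:ℕ)^n < 2^(n+1) := Nat.pow_lt_pow_right (by norm_num) (by omega)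
    have hne : (2:ℕ)^(2*n+1) - 2^n ≠ 2^(2*n+1) - 2^(n+1) := by omega
    rcases ht with h | h
    · rw [h, if_pos rfl, Nat.cast_sub hle3]; push_cast; ring
    · rw [h, if_neg hne, Nat.cast_sub hle4]; push_cast; ring
  have k1 := key _ t123
  have k2 := key _ t124
  have k3 := key _ t134
  have k4 := key _ t234
  have hNz : (N : ℤ) = (if (B₁ ∩ B₂ ∩ B₃).card = 2^(2*n+1) - 2^(n+1) then (1:ℤ) else 0) +
      (if (B₁ ∩ B₂ ∩ B₄).card = 2^(2*n+1) - 2^(n+1) then (1:ℤ) else 0) +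
      (if (B₁ ∩ B₃ ∩ B₄).card = 2^(2*n+1) - 2^(n+1) then (1:ℤ) else 0) +
      (if (B₂ ∩ B₃ ∩ B₄).card = 2^(2*n+1) - 2^(n+1) then (1:ℤ) else 0) := by
    rw [hN]; push_cast; rfl
  rw [hNz, show (2:ℤ)^(2*n+3) = 4 * 2^(2*n+1) from by ring,
    show (2:ℤ)^(n+2) = 4 * 2^n from by ring]
  have hc : ((2^(2*n+3) : ℕ) : ℤ) = 4 * 2^(2*n+1) := by push_cast; ring
  have p1 : (2:ℤ)^(2*n+3) = 4 * 2^(2*n+1) := by ring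
  have p2 : (2:ℤ)^(2*n+2) = 2 * 2^(2*n+1) := by ring
  have p3 : (2:ℤ)^(n+1) = 2 * 2^n := by ring
  linarith [k1, k2, k3, k4, h4, hc, p1, p2, p3]
end

section
/- Let m ≥ 2 and let D be an SDP design of order m. Then D satisfies Condition 2 if and only if for every four distinct blocks B₁, B₂, B₃, B₄ of D, the cardinality |B₁ ∩ B₂ ∩ B₃ ∩ B₄| is divisible by 2^(m−2) (for m = 2 this is the trivial divisor 1). -/
open Finset
open scoped symmDiff

/-- Condition 2: for every four distinct blocks, an even number of the four triple
intersections has cardinality `2^(2m-3) - 2^(m-1)`. -/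
def Condition2 {α : Type*} [Fintype α] [DecidableEq α]
    (m : ℕ) (ℬ : Finset (Finset α)) : Prop :=
  ∀ B₁ ∈ ℬ, ∀ B₂ ∈ ℬ, ∀ B₃ ∈ ℬ, ∀ B₄ ∈ ℬ,
    B₁ ≠ B₂ → B₁ ≠ B₃ → B₁ ≠ B₄ → B₂ ≠ B₃ → B₂ ≠ B₄ → B₃ ≠ B₄ →
    Even ((if (B₁ ∩ B₂ ∩ B₃).card = 2^(2*m-3) - 2^(m-1) then 1 else 0) +
          (if (B₁ ∩ B₂ ∩ B₄).card = 2^(2*m-3) - 2^(m-1) then 1 else 0) +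
          (if (B₁ ∩ B₃ ∩ B₄).card = 2^(2*m-3) - 2^(m-1) then 1 else 0) +
          (if (B₂ ∩ B₃ ∩ B₄).card = 2^(2*m-3) - 2^(m-1) then 1 else 0))

/-- Inclusion–exclusion identity for the intersection of a set with a triple
symmetric difference, in `ℤ`. -/
lemma card_inter_symmDiff3 {α : Type*} [Fintype α] [DecidableEq α]
    (A B C D : Finset α) :
    ((D ∩ (A ∆ B ∆ C)).card : ℤ) =
      (A ∩ D).card + (B ∩ D).card + (C ∩ D).card
      - 2 * ((A ∩ B ∩ D).card + (A ∩ C ∩ D).card + (B ∩ C ∩ D).card)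
      + 4 * (A ∩ B ∩ C ∩ D).card := by
  classical
  have key : ∀ S : Finset α, ((S.card : ℤ)) = ∑ x, (if x ∈ S then (1:ℤ) else 0) := by
    intro S
    rw [Finset.sum_ite_mem, Finset.univ_inter, Finset.sum_const, nsmul_eq_mul, mul_one]
  simp only [key, Finset.mul_sum, ← Finset.sum_add_distrib, ← Finset.sum_sub_distrib]
  refine Finset.sum_congr rfl fun x _ => ?_
  by_cases hA : x ∈ A <;> by_cases hB : x ∈ B <;> by_cases hC : x ∈ C <;>
    by_cases hD : x ∈ D <;>
    simp [hA, hB, hC, hD, Finset.mem_symmDiff]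

lemma card_symmDiff3 {α : Type*} [Fintype α] [DecidableEq α]
    (A B C : Finset α) :
    (((A ∆ B ∆ C)).card : ℤ) =
      A.card + B.card + C.card
      - 2 * ((A ∩ B).card + (A ∩ C).card + (B ∩ C).card)
      + 4 * (A ∩ B ∩ C).card := by
  have := card_inter_symmDiff3 A B C (Finset.univ)
  simpa using this

/-- Parity bridge. -/
lemma parity_bridge (x q A c : ℤ) (hx : 0 < x)
    (h4 : 4 * q = 4 * x * A + 2 * x * c) : x ∣ q ↔ 2 ∣ c := by
  constructor
  · rintro ⟨d, rfl⟩
    refine ⟨d - A, ?_⟩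
    have h : 2 * x * c = 2 * x * (2 * (d - A)) := by linarith
    exact (mul_left_cancel₀ (by positivity) h)
  · rintro ⟨d, rfl⟩
    refine ⟨A + d, ?_⟩
    have h : (4:ℤ) * q = 4 * (x * (A + d)) := by linarith
    linarith [mul_left_cancel₀ (show (4:ℤ) ≠ 0 by norm_num) h]

/-- cast helpers -/
lemma cast_k (n : ℕ) : ((2^(2*n+3) - 2^(n+1) : ℕ) : ℤ)
    = 8 * (2:ℤ)^n * (2:ℤ)^n - 2 * (2:ℤ)^n := by
  rw [Nat.cast_sub (Nat.pow_le_pow_right (by norm_num) (by omega))]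
  push_cast
  ring

lemma cast_lam (n : ℕ) : ((2^(2*n+2) - 2^(n+1) : ℕ) : ℤ)
    = 4 * (2:ℤ)^n * (2:ℤ)^n - 2 * (2:ℤ)^n := by
  rw [Nat.cast_sub (Nat.pow_le_pow_right (by norm_num) (by omega))]
  push_cast
  ring

lemma cast_t0 (n : ℕ) : ((2^(2*n+1) - 2^(n+1) : ℕ) : ℤ)
    = 2 * (2:ℤ)^n * (2:ℤ)^n - 2 * (2:ℤ)^n := by
  rw [Nat.cast_sub (Nat.pow_le_pow_right (by norm_num) (by omega))]
  push_cast
  ring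

lemma cast_v (n : ℕ) : ((2^(2*n+4) : ℕ) : ℤ) = 16 * (2:ℤ)^n * (2:ℤ)^n := by
  push_cast
  ring

section Main

variable {α : Type*} [Fintype α] [DecidableEq α] {ℬ : Finset (Finset α)} {n : ℕ}

/-- Triple intersections in an SDP design take one of two values. -/
lemma sdp_triple (hD : IsSDPDesign (n + 2) ℬ)
    {A B C : Finset α} (hA : A ∈ ℬ) (hB : B ∈ ℬ) (hC : C ∈ ℬ)
    (hAB : A ≠ B) (hAC : A ≠ C) (hBC : B ≠ C) :
    ((A ∩ B ∩ C).card : ℤ) = 2 * (2:ℤ)^n * (2:ℤ)^n - 2 * (2:ℤ)^n ∨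
    ((A ∩ B ∩ C).card : ℤ) = 2 * (2:ℤ)^n * (2:ℤ)^n - (2:ℤ)^n := by
  obtain ⟨⟨hv, hcard, hsize, hpairs, hinter⟩, hsdp⟩ := hD
  simp only [show 2*(n+2)-1 = 2*n+3 from by omega, show (n+2)-1 = n+1 from by omega,
    show 2*(n+2)-2 = 2*n+2 from by omega, show 2*(n+2) = 2*n+4 from by omega]
    at hsize hinter hv
  have hxpos : (0:ℤ) < (2:ℤ)^n := by positivity
  have hkA : (A.card : ℤ) = 8 * (2:ℤ)^n * (2:ℤ)^n - 2 * (2:ℤ)^n := by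
    rw [hsize A hA]; exact cast_k n
  have hkB : (B.card : ℤ) = 8 * (2:ℤ)^n * (2:ℤ)^n - 2 * (2:ℤ)^n := by
    rw [hsize B hB]; exact cast_k n
  have hkC : (C.card : ℤ) = 8 * (2:ℤ)^n * (2:ℤ)^n - 2 * (2:ℤ)^n := by
    rw [hsize C hC]; exact cast_k n
  have hlAB : ((A ∩ B).card : ℤ) = 4 * (2:ℤ)^n * (2:ℤ)^n - 2 * (2:ℤ)^n := by
    rw [hinter A hA B hB hAB]; exact cast_lam n
  have hlAC : ((A ∩ C).card : ℤ) = 4 * (2:ℤ)^n * (2:ℤ)^n - 2 * (2:ℤ)^n := by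
    rw [hinter A hA C hC hAC]; exact cast_lam n
  have hlBC : ((B ∩ C).card : ℤ) = 4 * (2:ℤ)^n * (2:ℤ)^n - 2 * (2:ℤ)^n := by
    rw [hinter B hB C hC hBC]; exact cast_lam n
  have hid := card_symmDiff3 A B C
  rcases hsdp A hA B hB C hC hAB hAC hBC with hblk | hcpl
  · left
    have hS : (((A ∆ B ∆ C)).card : ℤ) = 8 * (2:ℤ)^n * (2:ℤ)^n - 2 * (2:ℤ)^n := by
      rw [hsize _ hblk]; exact cast_k n
    linarith
  · right
    have h2' : (((A ∆ B ∆ C)ᶜ).card : ℤ) = 8 * (2:ℤ)^n * (2:ℤ)^n - 2 * (2:ℤ)^n := by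
      rw [hsize _ hcpl]; exact cast_k n
    have h3' : (((A ∆ B ∆ C)).card : ℤ) + (((A ∆ B ∆ C)ᶜ).card : ℤ)
        = 16 * (2:ℤ)^n * (2:ℤ)^n := by
      rw [← cast_v n, ← hv]
      exact_mod_cast congrArg (Nat.cast (R := ℤ)) (Finset.card_add_card_compl (A ∆ B ∆ C))
    linarith

/-- Key pointwise equivalence for a quadruple of distinct blocks. -/
lemma sdp_quad (hD : IsSDPDesign (n + 2) ℬ)
    {B₁ B₂ B₃ B₄ : Finset α} (h1 : B₁ ∈ ℬ) (h2 : B₂ ∈ ℬ) (h3 : B₃ ∈ ℬ) (h4 : B₄ ∈ ℬ)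
    (h12 : B₁ ≠ B₂) (h13 : B₁ ≠ B₃) (h14 : B₁ ≠ B₄)
    (h23 : B₂ ≠ B₃) (h24 : B₂ ≠ B₄) (h34 : B₃ ≠ B₄) :
    (Even ((if (B₁ ∩ B₂ ∩ B₃).card = 2^(2*(n+2)-3) - 2^((n+2)-1) then 1 else 0) +
          (if (B₁ ∩ B₂ ∩ B₄).card = 2^(2*(n+2)-3) - 2^((n+2)-1) then 1 else 0) +
          (if (B₁ ∩ B₃ ∩ B₄).card = 2^(2*(n+2)-3) - 2^((n+2)-1) then 1 else 0) +
          (if (B₂ ∩ B₃ ∩ B₄).card = 2^(2*(n+2)-3) - 2^((n+2)-1) then 1 else 0)) ↔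
      2^((n+2)-2) ∣ (B₁ ∩ B₂ ∩ B₃ ∩ B₄).card) := by
  classical
  have hxpos : (0:ℤ) < (2:ℤ)^n := by positivity
  simp only [show 2*(n+2)-3 = 2*n+1 from by omega, show (n+2)-1 = n+1 from by omega,
    show (n+2)-2 = n from by omega]
  have hcast : ∀ c : ℕ, (c = 2^(2*n+1) - 2^(n+1)) ↔
      ((c:ℤ) = 2 * (2:ℤ)^n * (2:ℤ)^n - 2 * (2:ℤ)^n) := by
    intro c
    constructor
    · rintro rfl; exact cast_t0 n
    · intro hc
      have : (c:ℤ) = ((2^(2*n+1) - 2^(n+1) : ℕ) : ℤ) := by rw [cast_t0 n]; exact hc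
      exact_mod_cast this
  have tripdesc : ∀ {A B C : Finset α}, A ∈ ℬ → B ∈ ℬ → C ∈ ℬ → A ≠ B → A ≠ C → B ≠ C →
      ∃ a : ℕ, (if (A ∩ B ∩ C).card = 2^(2*n+1) - 2^(n+1) then 1 else 0) = a ∧
        ((A ∩ B ∩ C).card : ℤ)
          = 2 * (2:ℤ)^n * (2:ℤ)^n - 2 * (2:ℤ)^n + (2:ℤ)^n * (1 - a) := by
    intro A B C hA hB hC hAB hAC hBC
    rcases sdp_triple hD hA hB hC hAB hAC hBC with h | h
    · exact ⟨1, if_pos ((hcast _).mpr h), by push_cast; linarith⟩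
    · refine ⟨0, if_neg ?_, by push_cast; linarith⟩
      intro hc
      have := (hcast _).mp hc
      rw [h] at this
      linarith
  obtain ⟨a2, ha2, h124⟩ := tripdesc h1 h2 h4 h12 h14 h24
  obtain ⟨a3, ha3, h134⟩ := tripdesc h1 h3 h4 h13 h14 h34
  obtain ⟨a4, ha4, h234⟩ := tripdesc h2 h3 h4 h23 h24 h34
  obtain ⟨⟨hv, hcard, hsize, hpairs, hinter⟩, hsdp⟩ := hD
  simp only [show 2*(n+2)-1 = 2*n+3 from by omega, show (n+2)-1 = n+1 from by omega,
    show 2*(n+2)-2 = 2*n+2 from by omega, show 2*(n+2) = 2*n+4 from by omega]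
    at hsize hinter hv
  have hc14 : ((B₁ ∩ B₄).card : ℤ) = 4 * (2:ℤ)^n * (2:ℤ)^n - 2 * (2:ℤ)^n := by
    rw [hinter B₁ h1 B₄ h4 h14]; exact cast_lam n
  have hc24 : ((B₂ ∩ B₄).card : ℤ) = 4 * (2:ℤ)^n * (2:ℤ)^n - 2 * (2:ℤ)^n := by
    rw [hinter B₂ h2 B₄ h4 h24]; exact cast_lam n
  have hc34 : ((B₃ ∩ B₄).card : ℤ) = 4 * (2:ℤ)^n * (2:ℤ)^n - 2 * (2:ℤ)^n := by
    rw [hinter B₃ h3 B₄ h4 h34]; exact cast_lam n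
  have hid := card_inter_symmDiff3 B₁ B₂ B₃ B₄
  have main : ∃ a1 : ℕ, (if (B₁ ∩ B₂ ∩ B₃).card = 2^(2*n+1) - 2^(n+1) then 1 else 0) = a1 ∧
      ∃ Acoef : ℤ, 4 * ((B₁ ∩ B₂ ∩ B₃ ∩ B₄).card : ℤ)
        = 4 * (2:ℤ)^n * Acoef + 2 * (2:ℤ)^n * (a1 - (a2 + a3 + a4)) := by
    have hid3 := card_symmDiff3 B₁ B₂ B₃
    have hl12 : ((B₁ ∩ B₂).card : ℤ) = 4 * (2:ℤ)^n * (2:ℤ)^n - 2 * (2:ℤ)^n := by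
      rw [hinter B₁ h1 B₂ h2 h12]; exact cast_lam n
    have hl13 : ((B₁ ∩ B₃).card : ℤ) = 4 * (2:ℤ)^n * (2:ℤ)^n - 2 * (2:ℤ)^n := by
      rw [hinter B₁ h1 B₃ h3 h13]; exact cast_lam n
    have hl23 : ((B₂ ∩ B₃).card : ℤ) = 4 * (2:ℤ)^n * (2:ℤ)^n - 2 * (2:ℤ)^n := by
      rw [hinter B₂ h2 B₃ h3 h23]; exact cast_lam n
    have hk1 : (B₁.card : ℤ) = 8 * (2:ℤ)^n * (2:ℤ)^n - 2 * (2:ℤ)^n := by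
      rw [hsize B₁ h1]; exact cast_k n
    have hk2 : (B₂.card : ℤ) = 8 * (2:ℤ)^n * (2:ℤ)^n - 2 * (2:ℤ)^n := by
      rw [hsize B₂ h2]; exact cast_k n
    have hk3 : (B₃.card : ℤ) = 8 * (2:ℤ)^n * (2:ℤ)^n - 2 * (2:ℤ)^n := by
      rw [hsize B₃ h3]; exact cast_k n
    rcases hsdp B₁ h1 B₂ h2 B₃ h3 h12 h13 h23 with hblk | hcpl
    · -- block case : t₁₂₃ = t₀, a1 = 1
      have hS : (((B₁ ∆ B₂ ∆ B₃)).card : ℤ) = 8 * (2:ℤ)^n * (2:ℤ)^n - 2 * (2:ℤ)^n := by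
        rw [hsize _ hblk]; exact cast_k n
      have ht123 : ((B₁ ∩ B₂ ∩ B₃).card : ℤ)
          = 2 * (2:ℤ)^n * (2:ℤ)^n - 2 * (2:ℤ)^n := by linarith
      refine ⟨1, if_pos ((hcast _).mpr ht123), ?_⟩
      by_cases hEq : B₁ ∆ B₂ ∆ B₃ = B₄
      · have hs : ((B₄ ∩ (B₁ ∆ B₂ ∆ B₃)).card : ℤ) = 8 * (2:ℤ)^n * (2:ℤ)^n - 2 * (2:ℤ)^n := by
          rw [hEq, Finset.inter_self, hsize B₄ h4]; exact cast_k n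
        refine ⟨2 * (2:ℤ)^n - 1, ?_⟩
        push_cast at h124 h134 h234 ⊢
        linarith
      · have hs : ((B₄ ∩ (B₁ ∆ B₂ ∆ B₃)).card : ℤ) = 4 * (2:ℤ)^n * (2:ℤ)^n - 2 * (2:ℤ)^n := by
          rw [Finset.inter_comm, hinter _ hblk B₄ h4 hEq]; exact cast_lam n
        refine ⟨(2:ℤ)^n - 1, ?_⟩
        push_cast at h124 h134 h234 ⊢
        linarith
    · -- complement case : t₁₂₃ = t₁, a1 = 0
      have h2' : (((B₁ ∆ B₂ ∆ B₃)ᶜ).card : ℤ) = 8 * (2:ℤ)^n * (2:ℤ)^n - 2 * (2:ℤ)^n := by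
        rw [hsize _ hcpl]; exact cast_k n
      have hS : (((B₁ ∆ B₂ ∆ B₃)).card : ℤ) = 8 * (2:ℤ)^n * (2:ℤ)^n + 2 * (2:ℤ)^n := by
        have h3' : (((B₁ ∆ B₂ ∆ B₃)).card : ℤ) + (((B₁ ∆ B₂ ∆ B₃)ᶜ).card : ℤ)
            = 16 * (2:ℤ)^n * (2:ℤ)^n := by
          rw [← cast_v n, ← hv]
          exact_mod_cast congrArg (Nat.cast (R := ℤ))
            (Finset.card_add_card_compl (B₁ ∆ B₂ ∆ B₃))
        linarith
      have ht123 : ((B₁ ∩ B₂ ∩ B₃).card : ℤ)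
          = 2 * (2:ℤ)^n * (2:ℤ)^n - (2:ℤ)^n := by linarith
      refine ⟨0, if_neg ?_, ?_⟩
      · intro hc
        have := (hcast _).mp hc
        rw [ht123] at this
        linarith
      by_cases hEq : (B₁ ∆ B₂ ∆ B₃)ᶜ = B₄
      · have hBeq : B₁ ∆ B₂ ∆ B₃ = B₄ᶜ := by rw [← hEq, compl_compl]
        have hs : ((B₄ ∩ (B₁ ∆ B₂ ∆ B₃)).card : ℤ) = 0 := by
          rw [hBeq, Finset.inter_compl, Finset.card_empty]
          norm_num
        refine ⟨0, ?_⟩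
        push_cast at h124 h134 h234 ⊢
        linarith
      · have hcompl : (((B₁ ∆ B₂ ∆ B₃)ᶜ ∩ B₄).card : ℤ)
            = 4 * (2:ℤ)^n * (2:ℤ)^n - 2 * (2:ℤ)^n := by
          rw [hinter _ hcpl B₄ h4 hEq]; exact cast_lam n
        have hsplit : (B₄ ∩ (B₁ ∆ B₂ ∆ B₃)).card + (B₄ ∩ (B₁ ∆ B₂ ∆ B₃)ᶜ).card = B₄.card := by
          have : B₄ \ (B₁ ∆ B₂ ∆ B₃) = B₄ ∩ (B₁ ∆ B₂ ∆ B₃)ᶜ := by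
            ext y
            simp only [Finset.mem_sdiff, Finset.mem_inter, Finset.mem_compl]
          rw [← this]
          exact Finset.card_inter_add_card_sdiff B₄ (B₁ ∆ B₂ ∆ B₃)
        have hk4 : (B₄.card : ℤ) = 8 * (2:ℤ)^n * (2:ℤ)^n - 2 * (2:ℤ)^n := by
          rw [hsize B₄ h4]; exact cast_k n
        have hs : ((B₄ ∩ (B₁ ∆ B₂ ∆ B₃)).card : ℤ) = 4 * (2:ℤ)^n * (2:ℤ)^n := by
          have hcast2 : ((B₄ ∩ (B₁ ∆ B₂ ∆ B₃)).card : ℤ)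
              + ((B₄ ∩ (B₁ ∆ B₂ ∆ B₃)ᶜ).card : ℤ) = (B₄.card : ℤ) := by
            exact_mod_cast congrArg (Nat.cast (R := ℤ)) hsplit
          rw [Finset.inter_comm B₄ ((B₁ ∆ B₂ ∆ B₃)ᶜ)] at hcast2
          linarith
        refine ⟨(2:ℤ)^n, ?_⟩
        push_cast at h124 h134 h234 ⊢
        linarith
  obtain ⟨a1, ha1, Acoef, hkey⟩ := main
  rw [ha1, ha2, ha3, ha4]
  have hdv : (2:ℕ)^n ∣ (B₁ ∩ B₂ ∩ B₃ ∩ B₄).card ↔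
      ((2:ℤ)^n) ∣ ((B₁ ∩ B₂ ∩ B₃ ∩ B₄).card : ℤ) := by
    rw [← Int.natCast_dvd_natCast]
    push_cast
    rfl
  rw [hdv, parity_bridge _ _ Acoef _ hxpos hkey, Nat.even_iff]
  omega

end Main

theorem sdp_condition2_iff_divisible {m : ℕ} (hm : 2 ≤ m)
    {α : Type*} [Fintype α] [DecidableEq α] {ℬ : Finset (Finset α)}
    (hD : IsSDPDesign m ℬ) :
    Condition2 m ℬ ↔
      ∀ B₁ ∈ ℬ, ∀ B₂ ∈ ℬ, ∀ B₃ ∈ ℬ, ∀ B₄ ∈ ℬ,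
        B₁ ≠ B₂ → B₁ ≠ B₃ → B₁ ≠ B₄ → B₂ ≠ B₃ → B₂ ≠ B₄ → B₃ ≠ B₄ →
        2^(m-2) ∣ (B₁ ∩ B₂ ∩ B₃ ∩ B₄).card := by
  obtain ⟨n, rfl⟩ : ∃ n, m = n + 2 := ⟨m - 2, by omega⟩
  constructor
  · intro h B₁ h1 B₂ h2 B₃ h3 B₄ h4 h12 h13 h14 h23 h24 h34
    exact (sdp_quad hD h1 h2 h3 h4 h12 h13 h14 h23 h24 h34).mp
      (h B₁ h1 B₂ h2 B₃ h3 B₄ h4 h12 h13 h14 h23 h24 h34)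
  · intro h B₁ h1 B₂ h2 B₃ h3 B₄ h4 h12 h13 h14 h23 h24 h34
    exact (sdp_quad hD h1 h2 h3 h4 h12 h13 h14 h23 h24 h34).mpr
      (h B₁ h1 B₂ h2 B₃ h3 B₄ h4 h12 h13 h14 h23 h24 h34)
end

section
/- Let m ≥ 2 and consider Block's construction on X_m = (Fin m → Fin 4). Then the map a ↦ B_a is injective, each block B_a has cardinality 2^(2m−1) − 2^(m−1), and every pair of distinct points of X_m lies in exactly 2^(2m−2) − 2^(m−1) of the blocks B_a; that is, (X_m, ℬ_m) is a square 2-(2^(2m), 2^(2m−1)−2^(m−1), 2^(2m−2)−2^(m−1)) design. -/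
open Finset

/-- Block's description: the block of the symplectic SDP design attached to the point
`a : Fin m → Fin 4` consists of those `x` agreeing with `a` in an odd number of coordinates. -/
def symplecticBlock (m : ℕ) (a : Fin m → Fin 4) : Finset (Fin m → Fin 4) :=
  Finset.univ.filter fun x => Odd (Finset.univ.filter (fun i => a i = x i)).card

/-- The block family of the symplectic SDP design of order `m` in Block's description. -/
def symplecticBlocks (m : ℕ) : Finset (Finset (Fin m → Fin 4)) :=
  Finset.univ.image (symplecticBlock m)

/-- Sign of agreement count. -/
def sgn {m : ℕ} (a x : Fin m → Fin 4) : ℤ :=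
  ∏ i, if a i = x i then (-1 : ℤ) else 1

lemma sgn_eq_ite {m : ℕ} (a x : Fin m → Fin 4) :
    sgn a x = if Odd (Finset.univ.filter (fun i => a i = x i)).card then (-1 : ℤ) else 1 := by
  have h : sgn a x = (-1 : ℤ) ^ (Finset.univ.filter (fun i => a i = x i)).card := by
    rw [sgn, Finset.prod_ite, Finset.prod_const, Finset.prod_const, one_pow, mul_one]
  rw [h]
  rcases Nat.even_or_odd ((Finset.univ.filter (fun i => a i = x i)).card) with he | ho
  · rw [he.neg_one_pow, if_neg (by simpa using he)]
  · rw [ho.neg_one_pow, if_pos ho]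

lemma mem_symplecticBlock {m : ℕ} (a x : Fin m → Fin 4) :
    x ∈ symplecticBlock m a ↔ Odd (Finset.univ.filter (fun i => a i = x i)).card := by
  simp [symplecticBlock]

lemma sgn_of_mem {m : ℕ} {a x : Fin m → Fin 4} (h : x ∈ symplecticBlock m a) :
    sgn a x = -1 := by
  rw [sgn_eq_ite, if_pos ((mem_symplecticBlock a x).mp h)]

lemma sgn_of_not_mem {m : ℕ} {a x : Fin m → Fin 4} (h : x ∉ symplecticBlock m a) :
    sgn a x = 1 := by
  rw [sgn_eq_ite, if_neg (fun ho => h ((mem_symplecticBlock a x).mpr ho))]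

lemma sgn_sq {m : ℕ} (a x : Fin m → Fin 4) : sgn a x * sgn a x = 1 := by
  rw [sgn_eq_ite]; split <;> norm_num

lemma fin4_sum1 (b : Fin 4) : ∑ c : Fin 4, (if b = c then (-1 : ℤ) else 1) = 2 := by
  fin_cases b <;> decide

lemma fin4_sum2 (b : Fin 4) : ∑ c : Fin 4, (if c = b then (-1 : ℤ) else 1) = 2 := by
  fin_cases b <;> decide

lemma fin4_sum_zero1 (u v : Fin 4) (h : u ≠ v) :
    ∑ c : Fin 4, (if u = c then (-1 : ℤ) else 1) * (if v = c then (-1 : ℤ) else 1) = 0 := by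
  fin_cases u <;> fin_cases v <;> first | exact absurd rfl h | decide

lemma fin4_sum_zero2 (u v : Fin 4) (h : u ≠ v) :
    ∑ c : Fin 4, (if c = u then (-1 : ℤ) else 1) * (if c = v then (-1 : ℤ) else 1) = 0 := by
  fin_cases u <;> fin_cases v <;> first | exact absurd rfl h | decide

lemma sum_sgn_right {m : ℕ} (a : Fin m → Fin 4) :
    ∑ x : Fin m → Fin 4, sgn a x = 2 ^ m := by
  have := (Fintype.prod_sum (κ := fun _ : Fin m => Fin 4)
    (f := fun i c => if a i = c then (-1 : ℤ) else 1)).symm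
  calc ∑ x : Fin m → Fin 4, sgn a x
      = ∏ i : Fin m, ∑ c : Fin 4, (if a i = c then (-1 : ℤ) else 1) := this
    _ = ∏ _i : Fin m, (2 : ℤ) := Finset.prod_congr rfl fun i _ => fin4_sum1 (a i)
    _ = 2 ^ m := by simp

lemma sum_sgn_left {m : ℕ} (p : Fin m → Fin 4) :
    ∑ a : Fin m → Fin 4, sgn a p = 2 ^ m := by
  have := (Fintype.prod_sum (κ := fun _ : Fin m => Fin 4)
    (f := fun i c => if c = p i then (-1 : ℤ) else 1)).symm
  calc ∑ a : Fin m → Fin 4, sgn a p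
      = ∏ i : Fin m, ∑ c : Fin 4, (if c = p i then (-1 : ℤ) else 1) := this
    _ = ∏ _i : Fin m, (2 : ℤ) := Finset.prod_congr rfl fun i _ => fin4_sum2 (p i)
    _ = 2 ^ m := by simp

lemma sum_sgn_mul_left {m : ℕ} (p q : Fin m → Fin 4) (h : p ≠ q) :
    ∑ a : Fin m → Fin 4, sgn a p * sgn a q = 0 := by
  have key : ∑ a : Fin m → Fin 4, sgn a p * sgn a q
      = ∏ i : Fin m, ∑ c : Fin 4,
          (if c = p i then (-1 : ℤ) else 1) * (if c = q i then (-1 : ℤ) else 1) := by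
    rw [Fintype.prod_sum (κ := fun _ : Fin m => Fin 4)
      (f := fun i c => (if c = p i then (-1 : ℤ) else 1) * (if c = q i then (-1 : ℤ) else 1))]
    refine Fintype.sum_congr _ _ fun a => ?_
    rw [sgn, sgn, ← Finset.prod_mul_distrib]
  rw [key]
  obtain ⟨i, hi⟩ := Function.ne_iff.mp h
  exact Finset.prod_eq_zero (Finset.mem_univ i) (fin4_sum_zero2 _ _ hi)

lemma sum_sgn_mul_right {m : ℕ} (a b : Fin m → Fin 4) (h : a ≠ b) :
    ∑ x : Fin m → Fin 4, sgn a x * sgn b x = 0 := by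
  have key : ∑ x : Fin m → Fin 4, sgn a x * sgn b x
      = ∏ i : Fin m, ∑ c : Fin 4,
          (if a i = c then (-1 : ℤ) else 1) * (if b i = c then (-1 : ℤ) else 1) := by
    rw [Fintype.prod_sum (κ := fun _ : Fin m => Fin 4)
      (f := fun i c => (if a i = c then (-1 : ℤ) else 1) * (if b i = c then (-1 : ℤ) else 1))]
    refine Fintype.sum_congr _ _ fun x => ?_
    rw [sgn, sgn, ← Finset.prod_mul_distrib]
  rw [key]
  obtain ⟨i, hi⟩ := Function.ne_iff.mp h
  exact Finset.prod_eq_zero (Finset.mem_univ i) (fin4_sum_zero1 _ _ hi)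

lemma card_univ_fn (m : ℕ) : (Finset.univ : Finset (Fin m → Fin 4)).card = 2 ^ (2 * m) := by
  rw [Finset.card_univ, Fintype.card_fun, Fintype.card_fin, Fintype.card_fin,
    show (4 : ℕ) = 2 ^ 2 from rfl, ← pow_mul]

lemma card_univ_fnZ (m : ℕ) :
    (((Finset.univ : Finset (Fin m → Fin 4)).card : ℤ)) = 2 ^ (2 * m) := by
  exact_mod_cast congrArg (Nat.cast : ℕ → ℤ) (card_univ_fn m)

theorem symplectic_is_square_design {m : ℕ} (hm : 2 ≤ m) :
    Function.Injective (symplecticBlock m) ∧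
    (∀ a : Fin m → Fin 4, (symplecticBlock m a).card = 2^(2*m-1) - 2^(m-1)) ∧
    (∀ p q : Fin m → Fin 4, p ≠ q →
      (Finset.univ.filter fun a : Fin m → Fin 4 =>
          p ∈ symplecticBlock m a ∧ q ∈ symplecticBlock m a).card
        = 2^(2*m-2) - 2^(m-1)) := by
  refine ⟨?_, ?_, ?_⟩
  · -- injectivity
    intro a b hab
    by_contra hne
    have h0 := sum_sgn_mul_right a b hne
    have heq : ∀ x : Fin m → Fin 4, sgn a x = sgn b x := by
      intro x
      by_cases h : x ∈ symplecticBlock m b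
      · rw [sgn_of_mem h, sgn_of_mem (hab ▸ h)]
      · rw [sgn_of_not_mem h, sgn_of_not_mem (hab ▸ h)]
    have h1 : ∑ x : Fin m → Fin 4, sgn a x * sgn b x = ∑ _x : Fin m → Fin 4, (1 : ℤ) :=
      Fintype.sum_congr _ _ fun x => by rw [heq x, sgn_sq]
    rw [h0, Finset.sum_const, nsmul_eq_mul, mul_one, card_univ_fnZ] at h1
    have : (0 : ℤ) < 2 ^ (2 * m) := by positivity
    omega
  · -- block size
    intro a
    have h1 : ∑ x : Fin m → Fin 4, sgn a x
        = ∑ x : Fin m → Fin 4,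
            (1 - 2 * if x ∈ symplecticBlock m a then (1 : ℤ) else 0) := by
      refine Fintype.sum_congr _ _ fun x => ?_
      by_cases h : x ∈ symplecticBlock m a
      · rw [sgn_of_mem h, if_pos h]; ring
      · rw [sgn_of_not_mem h, if_neg h]; ring
    rw [sum_sgn_right, Finset.sum_sub_distrib, ← Finset.mul_sum, Finset.sum_boole,
      Finset.sum_const, nsmul_eq_mul, mul_one, card_univ_fnZ,
      Finset.filter_mem_eq_inter, Finset.univ_inter] at h1
    have hle : (2 : ℕ) ^ (m - 1) ≤ 2 ^ (2 * m - 1) :=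
      Nat.pow_le_pow_right (by norm_num) (by omega)
    have hcast : ((2 ^ (2 * m - 1) - 2 ^ (m - 1) : ℕ) : ℤ)
        = 2 ^ (2 * m - 1) - 2 ^ (m - 1) := by push_cast [hle]; ring
    have h2m : (2 : ℤ) ^ (2 * m) = 2 ^ (2 * m - 1) * 2 := by
      rw [← pow_succ]; congr 1; omega
    have hmm : (2 : ℤ) ^ m = 2 ^ (m - 1) * 2 := by
      rw [← pow_succ]; congr 1; omega
    have : ((symplecticBlock m a).card : ℤ) = ((2 ^ (2 * m - 1) - 2 ^ (m - 1) : ℕ) : ℤ) := by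
      rw [hcast]; rw [h2m, hmm] at h1; linarith
    exact_mod_cast this
  · -- pair count
    intro p q hpq
    set N := (Finset.univ.filter fun a : Fin m → Fin 4 =>
        p ∈ symplecticBlock m a ∧ q ∈ symplecticBlock m a).card with hN
    have hpt : ∀ a : Fin m → Fin 4, (1 - sgn a p) * (1 - sgn a q)
        = 4 * if p ∈ symplecticBlock m a ∧ q ∈ symplecticBlock m a then (1 : ℤ) else 0 := by
      intro a
      by_cases h1 : p ∈ symplecticBlock m a
      · by_cases h2 : q ∈ symplecticBlock m a
        · rw [sgn_of_mem h1, sgn_of_mem h2, if_pos ⟨h1, h2⟩]; ring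
        · rw [sgn_of_mem h1, sgn_of_not_mem h2, if_neg (by tauto)]; ring
      · rw [sgn_of_not_mem h1, if_neg (by tauto)]; ring
    have hsum : ∑ a : Fin m → Fin 4, (1 - sgn a p) * (1 - sgn a q) = 4 * (N : ℤ) := by
      rw [Fintype.sum_congr _ _ hpt, ← Finset.mul_sum, Finset.sum_boole, hN]
    have hexp : ∑ a : Fin m → Fin 4, (1 - sgn a p) * (1 - sgn a q)
        = 2 ^ (2 * m) - 2 ^ m - 2 ^ m := by
      have hpw : ∀ a : Fin m → Fin 4, (1 - sgn a p) * (1 - sgn a q)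
          = 1 - sgn a p - sgn a q + sgn a p * sgn a q := fun a => by ring
      rw [Fintype.sum_congr _ _ hpw, Finset.sum_add_distrib, Finset.sum_sub_distrib,
        Finset.sum_sub_distrib, Finset.sum_const, sum_sgn_left p, sum_sgn_left q,
        sum_sgn_mul_left p q hpq, nsmul_eq_mul, mul_one, add_zero, card_univ_fnZ]
    have key : (4 : ℤ) * N = 2 ^ (2 * m) - 2 ^ m - 2 ^ m := by rw [← hsum, hexp]
    have hle : (2 : ℕ) ^ (m - 1) ≤ 2 ^ (2 * m - 2) :=
      Nat.pow_le_pow_right (by norm_num) (by omega)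
    have hcast : ((2 ^ (2 * m - 2) - 2 ^ (m - 1) : ℕ) : ℤ)
        = 2 ^ (2 * m - 2) - 2 ^ (m - 1) := by push_cast [hle]; ring
    have h2m : (2 : ℤ) ^ (2 * m) = 2 ^ (2 * m - 2) * 4 := by
      rw [show (4 : ℤ) = 2 ^ 2 by norm_num, ← pow_add]; congr 1; omega
    have hmm : (2 : ℤ) ^ m = 2 ^ (m - 1) * 2 := by
      rw [← pow_succ]; congr 1; omega
    have : (N : ℤ) = ((2 ^ (2 * m - 2) - 2 ^ (m - 1) : ℕ) : ℤ) := by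
      rw [hcast]; rw [h2m, hmm] at key; linarith
    exact_mod_cast this
end

section
/- Let m ≥ 2 and consider Block's construction on X_m = (Fin m → Fin 4). For any three distinct points a, b, c ∈ X_m there exists d ∈ X_m such that the symmetric difference B_a Δ B_b Δ B_c is equal to B_d or to the complement X_m \ B_d; that is, the design (X_m, ℬ_m) has the symmetric difference property (it is an SDP design). -/
open Finset

open scoped symmDiff

/-- XOR on `Fin 4`, viewing it as two bits. -/
def xor4 (p q : Fin 4) : Fin 4 := ⟨(p.val ^^^ q.val) % 4, Nat.mod_lt _ (by norm_num)⟩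

/-- Indicator (mod 2) of agreement count. -/
def chi4 (m : ℕ) (a x : Fin m → Fin 4) : ZMod 2 :=
  ((Finset.univ.filter fun i => a i = x i).card : ZMod 2)

lemma odd_iff_cast_one (n : ℕ) : Odd n ↔ (n : ZMod 2) = 1 := by
  rw [Nat.odd_iff, ← ZMod.natCast_mod n 2]
  rcases Nat.mod_two_eq_zero_or_one n with h | h <;> rw [h] <;> decide

lemma mem_block_iff (m : ℕ) (a x : Fin m → Fin 4) :
    x ∈ symplecticBlock m a ↔ chi4 m a x = 1 := by
  simp only [symplecticBlock, mem_filter, mem_univ, true_and, chi4, odd_iff_cast_one]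

lemma chi4_eq_sum (m : ℕ) (a x : Fin m → Fin 4) :
    chi4 m a x = ∑ i, (if a i = x i then (1 : ZMod 2) else 0) := by
  unfold chi4
  rw [Finset.card_filter]
  push_cast
  rfl

lemma coord4 (p q r x y : Fin 4) :
    (if p = x then (1 : ZMod 2) else 0) + (if q = x then (1 : ZMod 2) else 0)
      + (if r = x then (1 : ZMod 2) else 0)
      + (if xor4 (xor4 p q) r = x then (1 : ZMod 2) else 0)
    = (if p = y then (1 : ZMod 2) else 0) + (if q = y then (1 : ZMod 2) else 0)
      + (if r = y then (1 : ZMod 2) else 0)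
      + (if xor4 (xor4 p q) r = y then (1 : ZMod 2) else 0) := by
  revert p q r x y; decide

lemma key4 (m : ℕ) (a b c x y : Fin m → Fin 4) :
    chi4 m a x + chi4 m b x + chi4 m c x
        + chi4 m (fun i => xor4 (xor4 (a i) (b i)) (c i)) x
    = chi4 m a y + chi4 m b y + chi4 m c y
        + chi4 m (fun i => xor4 (xor4 (a i) (b i)) (c i)) y := by
  simp only [chi4_eq_sum, ← Finset.sum_add_distrib]
  exact Finset.sum_congr rfl fun i _ => coord4 _ _ _ _ _

theorem symplectic_has_sdp {m : ℕ} (hm : 2 ≤ m) :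
    ∀ a b c : Fin m → Fin 4, a ≠ b → a ≠ c → b ≠ c →
      ∃ d : Fin m → Fin 4,
        symplecticBlock m a ∆ symplecticBlock m b ∆ symplecticBlock m c = symplecticBlock m d ∨
        symplecticBlock m a ∆ symplecticBlock m b ∆ symplecticBlock m c = (symplecticBlock m d)ᶜ := by
  intro a b c _ _ _
  have zcases : ∀ z : ZMod 2, z = 0 ∨ z = 1 := by decide
  refine ⟨fun i => xor4 (xor4 (a i) (b i)) (c i), ?_⟩
  rcases zcases (chi4 m a a + chi4 m b a + chi4 m c a
      + chi4 m (fun i => xor4 (xor4 (a i) (b i)) (c i)) a) with hK | hK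
  · left
    ext x
    have h := key4 m a b c x a
    rw [hK] at h
    simp only [mem_symmDiff, mem_block_iff]
    rcases zcases (chi4 m a x) with h1 | h1 <;>
      rcases zcases (chi4 m b x) with h2 | h2 <;>
        rcases zcases (chi4 m c x) with h3 | h3 <;>
          rcases zcases (chi4 m (fun i => xor4 (xor4 (a i) (b i)) (c i)) x) with h4 | h4 <;>
            rw [h1, h2, h3, h4] at h ⊢ <;> revert h <;> decide
  · right
    ext x
    have h := key4 m a b c x a
    rw [hK] at h
    simp only [mem_symmDiff, mem_compl, mem_block_iff]
    rcases zcases (chi4 m a x) with h1 | h1 <;>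
      rcases zcases (chi4 m b x) with h2 | h2 <;>
        rcases zcases (chi4 m c x) with h3 | h3 <;>
          rcases zcases (chi4 m (fun i => xor4 (xor4 (a i) (b i)) (c i)) x) with h4 | h4 <;>
            rw [h1, h2, h3, h4] at h ⊢ <;> revert h <;> decide
end

section
/- Let m ≥ 2 and consider the symplectic SDP design of order m in Block's description. Then for any four distinct points a, b, c, d ∈ X_m, the cardinality |B_a ∩ B_b ∩ B_c ∩ B_d| is divisible by 2^(m−2) (for m = 2 this is the trivial divisor 1). -/
open Finset

/-!
Put `χ_a(x) = (-1) ^ #{i | a i = x i} = ∏ i, E (a i) (x i)` with `E = J - 2I` on `Fin 4`; then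
`1 - χ_a` is twice the indicator of `B_a`, so `S = B_a ∩ B_b ∩ B_c ∩ B_d` has
`16 |S| = ∑ x, ∏ t, (1 - χ_t x)`.
Expanding, every sum `∑ x, ∏ t ∈ T, χ_t x` factors over the coordinates into
`∏ i, ∑ v, ∏ t ∈ T, E (t i) v`, and a check on `Fin 4` evaluates the factors: `2` for one point,
`0` at a coordinate where two points differ, `±2` for three points (`-2` iff their entries are
pairwise distinct), a multiple of `4` for four. Hence
`16 |S| = 4^m - 4 · 2^m - 2^m (ε_abc + ε_abd + ε_acd + ε_bcd) + 4^m q` with signs `ε = ±1`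
whose product is `1` coordinatewise, so their sum is divisible by `4` and `2^(m+2) ∣ 16 |S|`.
-/

namespace SymplecticDesign

def agreeSign (u v : Fin 4) : ℤ := if u = v then -1 else 1

def distinctSign (u v w : Fin 4) : ℤ := if u = v ∨ u = w ∨ v = w then 1 else -1

theorem sum_agreeSign (u : Fin 4) : ∑ v, agreeSign u v = 2 := by
  revert u; decide

theorem sum_agreeSign_mul_agreeSign {u w : Fin 4} (h : u ≠ w) :
    ∑ v, agreeSign u v * agreeSign w v = 0 := by
  revert u w; decide

theorem sum_agreeSign_mul3 (u w z : Fin 4) :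
    ∑ v, agreeSign u v * agreeSign w v * agreeSign z v = 2 * distinctSign u w z := by
  revert u w z; decide

theorem four_dvd_sum_agreeSign_mul4 (u w y z : Fin 4) :
    (4 : ℤ) ∣ ∑ v, agreeSign u v * agreeSign w v * agreeSign y v * agreeSign z v := by
  revert u w y z; decide

theorem distinctSign_mul_self (u v w : Fin 4) : distinctSign u v w * distinctSign u v w = 1 := by
  revert u v w; decide

theorem distinctSign_mul4 (u v w z : Fin 4) :
    distinctSign u v w * distinctSign u v z * distinctSign u w z * distinctSign v w z = 1 := by
  revert u v w z; decide

theorem four_dvd_add4_of_mul4_eq_one {e₁ e₂ e₃ e₄ : ℤ} (h₁ : e₁ * e₁ = 1) (h₂ : e₂ * e₂ = 1)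
    (h₃ : e₃ * e₃ = 1) (h₄ : e₄ * e₄ = 1) (h : e₁ * e₂ * e₃ * e₄ = 1) :
    4 ∣ e₁ + e₂ + e₃ + e₄ := by
  rw [mul_self_eq_one_iff] at h₁ h₂ h₃ h₄
  rcases h₁ with rfl | rfl <;> rcases h₂ with rfl | rfl <;> rcases h₃ with rfl | rfl <;>
    rcases h₄ with rfl | rfl <;> omega

section

variable {ι : Type*} [Fintype ι]

def character (a x : ι → Fin 4) : ℤ := ∏ i, agreeSign (a i) (x i)

theorem character_eq_neg_one_pow (a x : ι → Fin 4) :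
    character a x = (-1) ^ #{i | a i = x i} := by
  simp only [character, agreeSign]
  rw [← prod_filter, prod_const]

def tripleSign (a b c : ι → Fin 4) : ℤ := ∏ i, distinctSign (a i) (b i) (c i)

theorem tripleSign_mul_self (a b c : ι → Fin 4) : tripleSign a b c * tripleSign a b c = 1 := by
  rw [tripleSign, ← prod_mul_distrib]
  exact prod_eq_one fun i _ => distinctSign_mul_self _ _ _

theorem tripleSign_mul4 (a b c d : ι → Fin 4) :
    tripleSign a b c * tripleSign a b d * tripleSign a c d * tripleSign b c d = 1 := by
  simp only [tripleSign, ← prod_mul_distrib]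
  exact prod_eq_one fun i _ => distinctSign_mul4 _ _ _ _

theorem four_dvd_sum_tripleSign (a b c d : ι → Fin 4) :
    4 ∣ tripleSign a b c + tripleSign a b d + tripleSign a c d + tripleSign b c d :=
  four_dvd_add4_of_mul4_eq_one (tripleSign_mul_self ..) (tripleSign_mul_self ..)
    (tripleSign_mul_self ..) (tripleSign_mul_self ..) (tripleSign_mul4 ..)

variable [DecidableEq ι]

theorem sum_prod_character {κ : Type*} [Fintype κ] (p : κ → ι → Fin 4) :
    ∑ x, ∏ k, character (p k) x = ∏ i, ∑ v, ∏ k, agreeSign (p k i) v := by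
  simp only [character]
  simp_rw [prod_comm (s := (univ : Finset κ))]
  exact (Fintype.prod_sum (fun i v => ∏ k, agreeSign (p k i) v)).symm

theorem sum_character (a : ι → Fin 4) : ∑ x, character a x = 2 ^ Fintype.card ι := by
  simpa [sum_agreeSign] using sum_prod_character ![a]

theorem sum_character_mul_character {a b : ι → Fin 4} (h : a ≠ b) :
    ∑ x, character a x * character b x = 0 := by
  obtain ⟨i, hi⟩ := Function.ne_iff.mp h
  have := sum_prod_character ![a, b]
  simp only [Fin.prod_univ_two, Matrix.cons_val_zero, Matrix.cons_val_one] at this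
  rw [this]
  exact prod_eq_zero (mem_univ i) (sum_agreeSign_mul_agreeSign hi)

theorem sum_character_mul3 (a b c : ι → Fin 4) :
    ∑ x, character a x * character b x * character c x = 2 ^ Fintype.card ι * tripleSign a b c := by
  simpa [Fin.prod_univ_three, sum_agreeSign_mul3, prod_mul_distrib, tripleSign]
    using sum_prod_character ![a, b, c]

theorem four_pow_dvd_sum_character_mul4 (a b c d : ι → Fin 4) :
    4 ^ Fintype.card ι ∣ ∑ x, character a x * character b x * character c x * character d x := by
  have := sum_prod_character ![a, b, c, d]
  simp only [Fin.prod_univ_four, Matrix.cons_val_zero, Matrix.cons_val_one, Matrix.cons_val_two,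
    Matrix.cons_val_three, Matrix.tail_cons, Matrix.head_cons] at this
  rw [this, ← card_univ, ← prod_const]
  exact prod_dvd_prod_of_dvd _ _ fun i _ => four_dvd_sum_agreeSign_mul4 _ _ _ _

end

theorem one_sub_character {m : ℕ} (a x : Fin m → Fin 4) :
    1 - character a x = if x ∈ symplecticBlock m a then 2 else 0 := by
  simp only [character_eq_neg_one_pow, symplecticBlock, mem_filter, mem_univ, true_and]
  rcases Nat.even_or_odd #{i | a i = x i} with h | h
  · simp [h.neg_one_pow, Nat.not_odd_iff_even.mpr h]
  · simp [h.neg_one_pow, h]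

theorem sixteen_mul_card_inter {m : ℕ} {a b c d : Fin m → Fin 4} (hab : a ≠ b) (hac : a ≠ c)
    (had : a ≠ d) (hbc : b ≠ c) (hbd : b ≠ d) (hcd : c ≠ d) :
    16 * (#(symplecticBlock m a ∩ symplecticBlock m b ∩ symplecticBlock m c ∩
        symplecticBlock m d) : ℤ) =
      4 ^ m - 4 * 2 ^ m - 2 ^ m * (tripleSign a b c + tripleSign a b d + tripleSign a c d +
        tripleSign b c d) + ∑ x, character a x * character b x * character c x * character d x := by
  set S := symplecticBlock m a ∩ symplecticBlock m b ∩ symplecticBlock m c ∩ symplecticBlock m d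
  have indicator (x : Fin m → Fin 4) :
      (1 - character a x) * (1 - character b x) * (1 - character c x) * (1 - character d x) =
        if x ∈ S then 16 else 0 := by
    simp only [one_sub_character, S, mem_inter]
    split_ifs <;> simp_all
  have expand (x : Fin m → Fin 4) :
      (1 - character a x) * (1 - character b x) * (1 - character c x) * (1 - character d x) =
        1 - character a x - character b x - character c x - character d x
          + character a x * character b x + character a x * character c x
          + character a x * character d x + character b x * character c x
          + character b x * character d x + character c x * character d x
          - character a x * character b x * character c x
          - character a x * character b x * character d x
          - character a x * character c x * character d x
          - character b x * character c x * character d x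
          + character a x * character b x * character c x * character d x := by
    ring
  calc 16 * (#S : ℤ)
      = ∑ x, (1 - character a x) * (1 - character b x) * (1 - character c x) *
          (1 - character d x) := by
        simp only [indicator, sum_ite_mem, univ_inter, sum_const, nsmul_eq_mul]
        ring
    _ = _ := by
        simp only [expand, sum_add_distrib, sum_sub_distrib, sum_character,
          sum_character_mul_character hab, sum_character_mul_character hac,
          sum_character_mul_character had, sum_character_mul_character hbc,
          sum_character_mul_character hbd, sum_character_mul_character hcd, sum_character_mul3,
          sum_const, card_univ, Fintype.card_fun, Fintype.card_fin, nsmul_eq_mul]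
        push_cast
        ring

end SymplecticDesign

open SymplecticDesign in
theorem symplectic_quadruple_divisible {m : ℕ} (hm : 2 ≤ m) :
    ∀ a b c d : Fin m → Fin 4, a ≠ b → a ≠ c → a ≠ d → b ≠ c → b ≠ d → c ≠ d →
      2^(m-2) ∣ (symplecticBlock m a ∩ symplecticBlock m b ∩
                  symplecticBlock m c ∩ symplecticBlock m d).card := by
  intro a b c d hab hac had hbc hbd hcd
  obtain ⟨k, rfl⟩ : ∃ k, m = k + 2 := ⟨m - 2, by omega⟩
  have hcount := sixteen_mul_card_inter hab hac had hbc hbd hcd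
  obtain ⟨q, hq⟩ := four_pow_dvd_sum_character_mul4 a b c d
  obtain ⟨e, he⟩ := four_dvd_sum_tripleSign a b c d
  set S := symplecticBlock (k + 2) a ∩ symplecticBlock (k + 2) b ∩ symplecticBlock (k + 2) c ∩
    symplecticBlock (k + 2) d
  have h16 : 16 * (#S : ℤ) = 16 * (2 ^ k * (2 ^ k - 1 - e + 2 ^ k * q)) := by
    rw [hcount, hq, he, Fintype.card_fin,
      show (4 : ℤ) ^ (k + 2) = 2 ^ (k + 2) * 2 ^ (k + 2) by rw [← mul_pow]; norm_num]
    ring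
  have hdvd : (2 : ℤ) ^ k ∣ #S := ⟨_, mul_left_cancel₀ (by norm_num) h16⟩
  rw [Nat.add_sub_cancel]
  exact_mod_cast hdvd
end

section
/- Let v be a positive integer divisible by 4, and let S be a finite set of vectors in (Fin v → ZMod 2) such that any two distinct vectors of S have Hamming distance at least v/2. Then |S| ≤ 2v. Consequently, there is no binary code of length v with 2v + 1 codewords and minimum distance v/2. -/
open Finset

lemma col_sum_bound {n : ℕ} (C : Finset (Fin n → ZMod 2)) (i : Fin n) :
    2 * (∑ x ∈ C, ∑ y ∈ C, (if x i = y i then 0 else 1)) ≤ C.card * C.card := by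
  classical
  have hval : ∀ a : ZMod 2, a = 0 ∨ a = 1 := by decide
  set A := C.filter (fun x => x i = 1) with hA
  set B := C.filter (fun x => ¬ x i = 1) with hB
  have hcard : A.card + B.card = C.card := Finset.card_filter_add_card_filter_not _
  have hsplit : ∀ x ∈ C, (∑ y ∈ C, if x i = y i then (0:ℕ) else 1)
      = if x i = 1 then B.card else A.card := by
    intro x hx
    have hsum : (∑ y ∈ C, if x i = y i then (0:ℕ) else 1)
        = (C.filter (fun y => ¬ x i = y i)).card := by
      rw [Finset.sum_ite, Finset.sum_const, Finset.sum_const]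
      simp [Finset.filter_not]
    by_cases hxi : x i = 1
    · rw [if_pos hxi, hsum]
      congr 1
      apply Finset.filter_congr
      intro y hy
      simp [hxi, eq_comm]
    · rw [if_neg hxi, hsum]
      have hx0 : x i = 0 := (hval (x i)).resolve_right hxi
      congr 1
      apply Finset.filter_congr
      intro y hy
      rcases hval (y i) with h | h <;> simp [hx0, h]
  rw [Finset.sum_congr rfl hsplit, Finset.sum_ite, Finset.sum_const, Finset.sum_const]
  rw [← hA, ← hB, ← hcard]
  simp only [smul_eq_mul]
  zify
  nlinarith [sq_nonneg ((A.card:ℤ) - B.card)]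

lemma half_code_card_le {v w : ℕ} (hw : v = 4 * w) (hwpos : 0 < w)
    (L : Fin v) (c : ZMod 2) (C : Finset (Fin v → ZMod 2))
    (hc : ∀ x ∈ C, x L = c)
    (hd : ∀ x ∈ C, ∀ y ∈ C, x ≠ y → 2 * w ≤ hammingDist x y) :
    C.card ≤ v := by
  classical
  set M := C.card with hM
  -- the total sum of pairwise distances
  set T := ∑ x ∈ C, ∑ y ∈ C, hammingDist x y with hT
  -- column sums
  have hdist : ∀ x y : Fin v → ZMod 2,
      hammingDist x y = ∑ i : Fin v, (if x i = y i then 0 else 1) := by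
    intro x y
    rw [hammingDist, Finset.card_filter]
    exact Finset.sum_congr rfl fun i _ => by by_cases h : x i = y i <;> simp [h]
  have hTcol : T = ∑ i : Fin v, ∑ x ∈ C, ∑ y ∈ C, (if x i = y i then 0 else 1) := by
    rw [hT]
    rw [show (∑ x ∈ C, ∑ y ∈ C, hammingDist x y)
        = ∑ x ∈ C, ∑ i : Fin v, ∑ y ∈ C, (if x i = y i then 0 else 1) from
      Finset.sum_congr rfl fun x _ => by
        rw [show (∑ y ∈ C, hammingDist x y)
            = ∑ y ∈ C, ∑ i : Fin v, (if x i = y i then 0 else 1) from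
          Finset.sum_congr rfl fun y _ => hdist x y]
        exact Finset.sum_comm]
    exact Finset.sum_comm
  -- lower bound for T
  have hlow : (M * M - M) * (2 * w) ≤ T := by
    have h1 : C.offDiag.card * (2 * w) ≤ ∑ p ∈ C.offDiag, hammingDist p.1 p.2 := by
      have := Finset.card_nsmul_le_sum C.offDiag (fun p => hammingDist p.1 p.2) (2 * w)
        (fun p hp => by
          rcases Finset.mem_offDiag.mp hp with ⟨h1, h2, h3⟩
          exact hd _ h1 _ h2 h3)
      simpa using this
    have h2 : ∑ p ∈ C.offDiag, hammingDist p.1 p.2 ≤ T := by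
      rw [hT, ← Finset.sum_product']
      apply Finset.sum_le_sum_of_subset
      intro p hp
      rcases Finset.mem_offDiag.mp hp with ⟨h1, h2, _⟩
      exact Finset.mem_product.mpr ⟨h1, h2⟩
    calc (M * M - M) * (2 * w) = C.offDiag.card * (2 * w) := by rw [Finset.offDiag_card]
      _ ≤ _ := le_trans h1 h2
  -- upper bound for 2*T : column L contributes 0, other columns at most M^2/2
  have hcolL : (∑ x ∈ C, ∑ y ∈ C, (if x L = y L then (0:ℕ) else 1)) = 0 := by
    apply Finset.sum_eq_zero
    intro x hx
    apply Finset.sum_eq_zero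
    intro y hy
    rw [if_pos ((hc x hx).trans (hc y hy).symm)]
  have hup : 2 * T ≤ (v - 1) * (M * M) := by
    have herase : T = ∑ i ∈ Finset.univ.erase L,
        ∑ x ∈ C, ∑ y ∈ C, (if x i = y i then 0 else 1) := by
      rw [hTcol, ← Finset.sum_erase_add _ _ (Finset.mem_univ L), hcolL, add_zero]
    rw [herase, Finset.mul_sum]
    calc ∑ i ∈ Finset.univ.erase L, 2 * ∑ x ∈ C, ∑ y ∈ C, (if x i = y i then (0:ℕ) else 1)
        ≤ ∑ i ∈ Finset.univ.erase L, M * M :=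
          Finset.sum_le_sum fun i _ => col_sum_bound C i
      _ = (v - 1) * (M * M) := by
          rw [Finset.sum_const, smul_eq_mul, Finset.card_erase_of_mem (Finset.mem_univ L),
            Finset.card_univ, Fintype.card_fin]
  -- combine
  clear_value T M
  clear hc hd hdist hTcol hcolL hT hM
  rcases Nat.eq_zero_or_pos M with hM0 | hM0
  · omega
  have hMsub : M * M - M + M = M * M := Nat.sub_add_cancel (Nat.le_mul_of_pos_left M hM0)
  have hkey : 2 * ((M * M - M) * (2 * w)) ≤ (v - 1) * (M * M) :=
    le_trans (Nat.mul_le_mul_left 2 hlow) hup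
  -- deduce M ≤ v
  have hv1 : 1 ≤ v := by omega
  have hv4 : v - 1 + 1 = 4 * w := by omega
  obtain ⟨D, hD⟩ : ∃ D, M * M - M = D := ⟨_, rfl⟩
  rw [hD] at hMsub hkey
  have heq : 2 * (D * (2 * w)) = (v - 1) * D + D := by
    calc 2 * (D * (2 * w)) = (v - 1 + 1) * D := by rw [hv4]; ring
      _ = (v - 1) * D + D := by ring
  rw [heq] at hkey
  have h1 : (v - 1) * (M * M) = (v - 1) * D + (v - 1) * M := by
    rw [← hMsub]; ring
  rw [h1] at hkey
  have h2 : D ≤ (v - 1) * M := by linarith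
  have h3 : M * M ≤ v * M := by
    calc M * M = D + M := hMsub.symm
      _ ≤ (v - 1) * M + M := by linarith
      _ = (v - 1 + 1) * M := by ring
      _ = v * M := by rw [Nat.sub_add_cancel hv1]
  exact Nat.le_of_mul_le_mul_right h3 hM0

lemma plotkin_aux {v : ℕ} (hv : 0 < v) (h4 : 4 ∣ v)
    (S : Finset (Fin v → ZMod 2))
    (hS : ∀ x ∈ S, ∀ y ∈ S, x ≠ y → v / 2 ≤ hammingDist x y) :
    S.card ≤ 2 * v := by
  classical
  obtain ⟨w, hw⟩ := h4
  have hwpos : 0 < w := by omega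
  have hhalf : v / 2 = 2 * w := by omega
  set L : Fin v := ⟨0, hv⟩ with hL
  have hpart : ∀ c : ZMod 2, (S.filter (fun x => x L = c)).card ≤ v := by
    intro c
    apply half_code_card_le hw hwpos L c
    · intro x hx
      exact (Finset.mem_filter.mp hx).2
    · intro x hx y hy hxy
      have := hS x (Finset.mem_filter.mp hx).1 y (Finset.mem_filter.mp hy).1 hxy
      omega
  have hsplit : (S.filter (fun x => x L = 1)).card + (S.filter (fun x => ¬ x L = 1)).card
      = S.card := Finset.card_filter_add_card_filter_not _
  have h0 : (S.filter (fun x => ¬ x L = 1)) = (S.filter (fun x => x L = 0)) := by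
    apply Finset.filter_congr
    intro x hx
    have : ∀ a : ZMod 2, (¬ a = 1) ↔ a = 0 := by decide
    simp [this]
  rw [h0] at hsplit
  calc S.card = _ + _ := hsplit.symm
    _ ≤ v + v := Nat.add_le_add (hpart 1) (hpart 0)
    _ = 2 * v := by ring

/-- Plotkin bound in the case where the minimum distance equals half the length:
a binary code of length `v` (with `4 ∣ v`) and minimum distance at least `v/2`
has at most `2v` codewords; consequently there is no such code with `2v + 1` codewords. -/
theorem plotkin_half_length {v : ℕ} (hv : 0 < v) (h4 : 4 ∣ v)
    (S : Finset (Fin v → ZMod 2))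
    (hS : ∀ x ∈ S, ∀ y ∈ S, x ≠ y → v / 2 ≤ hammingDist x y) :
    S.card ≤ 2 * v ∧
    ¬ ∃ T : Finset (Fin v → ZMod 2), T.card = 2 * v + 1 ∧
        ∀ x ∈ T, ∀ y ∈ T, x ≠ y → v / 2 ≤ hammingDist x y := by
  refine ⟨plotkin_aux hv h4 S hS, ?_⟩
  rintro ⟨T, hT1, hT2⟩
  have h := plotkin_aux hv h4 T hT2
  rw [hT1] at h
  exact absurd h (by omega)
end
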